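/- arXiv:cs/0205047 — 5 statements merged into one kernel-verified Lean document; each statement's English description precedes it below -/
import Mathlib

section
/- Chernoff bound, lower tail: let X_1, …, X_k be independent random variables taking values in [0,1], let μ > 0 satisfy E[X_1 + ⋯ + X_k] ≥ μ, and let 0 < ε < 1. Then P[X_1 + ⋯ + X_k ≤ (1−ε)μ] < exp(−chern(−ε) · μ), where chern(ε) := (1+ε)·ln(1+ε) − ε. -/
open MeasureTheory ProbabilityTheory

/-- `chern ε = (1+ε)·ln(1+ε) − ε`. -/
noncomputable def chern (ε : ℝ) : ℝ := (1 + ε) * Real.log (1 + ε) - ε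

/-!
Chernoff's method with `t = log (1 - ε) < 0`: by Markov, `P[S ≤ a] ≤ e^{-ta} E[e^{tS}]`, and
`E[e^{tS}]` factors over the independent summands. Convexity of `exp` gives
`E[e^{tX}] ≤ 1 + (e^t - 1) E[X] ≤ exp ((e^t - 1) E[X])` for `X ∈ [0,1]`, and the last step is
strict as soon as `E[X] > 0`, which must hold for some summand since `E[S] ≥ μ > 0`.
With `e^t - 1 = -ε` the exponent `-ta - ε E[S]` is at most `-chern(-ε) μ`.
-/

open Real in
theorem Real.exp_mul_le_one_add_mul {x : ℝ} (hx : x ∈ Set.Icc (0 : ℝ) 1) (t : ℝ) :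
    exp (t * x) ≤ 1 + (exp t - 1) * x := by
  have h := convexOn_exp.2 (Set.mem_univ 0) (Set.mem_univ t) (sub_nonneg.2 hx.2) hx.1
    (sub_add_cancel 1 x)
  simp only [smul_eq_mul, mul_zero, zero_add, exp_zero, mul_one] at h
  rw [mul_comm t x]
  linarith

namespace ProbabilityTheory

open Real

section UnitInterval

variable {Ω : Type*} [MeasurableSpace Ω] {P : Measure Ω} [IsProbabilityMeasure P] {Y : Ω → ℝ}

theorem mgf_le_one_add_mul_integral_of_mem_Icc (hY : AEMeasurable Y P)
    (h01 : ∀ᵐ ω ∂P, Y ω ∈ Set.Icc (0 : ℝ) 1) (t : ℝ) :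
    mgf Y P t ≤ 1 + (exp t - 1) * P[Y] := by
  have hYint : Integrable Y P := .of_mem_Icc 0 1 hY h01
  calc mgf Y P t ≤ ∫ ω, (1 + (exp t - 1) * Y ω) ∂P :=
        integral_mono_ae (integrable_exp_mul_of_mem_Icc hY h01)
          ((integrable_const 1).add (hYint.const_mul _))
          (h01.mono fun ω hω => exp_mul_le_one_add_mul hω t)
    _ = 1 + (exp t - 1) * P[Y] := by
        rw [integral_add (integrable_const 1) (hYint.const_mul _), integral_const_mul]
        simp

theorem mgf_le_exp_mul_integral_of_mem_Icc (hY : AEMeasurable Y P)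
    (h01 : ∀ᵐ ω ∂P, Y ω ∈ Set.Icc (0 : ℝ) 1) (t : ℝ) :
    mgf Y P t ≤ exp ((exp t - 1) * P[Y]) := by
  linarith [mgf_le_one_add_mul_integral_of_mem_Icc hY h01 t, add_one_le_exp ((exp t - 1) * P[Y])]

theorem mgf_lt_exp_mul_integral_of_mem_Icc (hY : AEMeasurable Y P)
    (h01 : ∀ᵐ ω ∂P, Y ω ∈ Set.Icc (0 : ℝ) 1) {t : ℝ} (ht : t ≠ 0) (hpos : 0 < P[Y]) :
    mgf Y P t < exp ((exp t - 1) * P[Y]) := by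
  have hne : (exp t - 1) * P[Y] ≠ 0 :=
    mul_ne_zero (sub_ne_zero.2 (mt (Real.exp_eq_one_iff t).1 ht)) hpos.ne'
  linarith [mgf_le_one_add_mul_integral_of_mem_Icc hY h01 t, add_one_lt_exp hne]

variable {ι : Type*} [Fintype ι] {X : ι → Ω → ℝ}

theorem mgf_sum_lt_exp_mul_integral_of_mem_Icc (hmeas : ∀ i, Measurable (X i))
    (h01 : ∀ i, ∀ᵐ ω ∂P, X i ω ∈ Set.Icc (0 : ℝ) 1) (hindep : iIndepFun X P)
    {t : ℝ} (ht : t ≠ 0) (hpos : 0 < ∫ ω, ∑ i, X i ω ∂P) :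
    mgf (fun ω => ∑ i, X i ω) P t < exp ((exp t - 1) * ∫ ω, ∑ i, X i ω ∂P) := by
  have hint : ∫ ω, ∑ i, X i ω ∂P = ∑ i, P[X i] :=
    integral_finsetSum _ fun i _ => .of_mem_Icc 0 1 (hmeas i).aemeasurable (h01 i)
  obtain ⟨i₀, -, hi₀⟩ : ∃ i ∈ Finset.univ, 0 < P[X i] :=
    Finset.exists_lt_of_sum_lt (f := 0) (by simpa [hint] using hpos)
  have hmgf : mgf (fun ω => ∑ i, X i ω) P t = ∏ i, mgf (X i) P t := by
    rw [← hindep.mgf_sum hmeas Finset.univ]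
    congr 1
    ext ω
    simp
  rw [hmgf, hint, Finset.mul_sum, exp_sum]
  exact Finset.prod_lt_prod
    (fun i _ => mgf_pos (integrable_exp_mul_of_mem_Icc (hmeas i).aemeasurable (h01 i)))
    (fun i _ => mgf_le_exp_mul_integral_of_mem_Icc (hmeas i).aemeasurable (h01 i) t)
    ⟨i₀, Finset.mem_univ _, mgf_lt_exp_mul_integral_of_mem_Icc (hmeas i₀).aemeasurable (h01 i₀)
      ht hi₀⟩

theorem measureReal_sum_le_lt_exp_of_mem_Icc (hmeas : ∀ i, Measurable (X i))
    (h01 : ∀ i, ∀ᵐ ω ∂P, X i ω ∈ Set.Icc (0 : ℝ) 1) (hindep : iIndepFun X P)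
    {t : ℝ} (ht : t < 0) (hpos : 0 < ∫ ω, ∑ i, X i ω ∂P) (a : ℝ) :
    P.real {ω | ∑ i, X i ω ≤ a} < exp (-t * a + (exp t - 1) * ∫ ω, ∑ i, X i ω ∂P) := by
  have hS : ∀ᵐ ω ∂P, ∑ i, X i ω ∈ Set.Icc (0 : ℝ) (Fintype.card ι) := by
    filter_upwards [ae_all_iff.2 h01] with ω hω
    refine ⟨Finset.sum_nonneg fun i _ => (hω i).1, ?_⟩
    simpa using Finset.sum_le_sum fun i (_ : i ∈ Finset.univ) => (hω i).2
  have hSmeas : AEMeasurable (fun ω => ∑ i, X i ω) P :=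
    (Finset.measurable_fun_sum Finset.univ fun i _ => hmeas i).aemeasurable
  calc P.real {ω | ∑ i, X i ω ≤ a}
      ≤ exp (-t * a) * mgf (fun ω => ∑ i, X i ω) P t :=
        measure_le_le_exp_mul_mgf a ht.le (integrable_exp_mul_of_mem_Icc hSmeas hS)
    _ < exp (-t * a) * exp ((exp t - 1) * ∫ ω, ∑ i, X i ω ∂P) :=
        mul_lt_mul_of_pos_left
          (mgf_sum_lt_exp_mul_integral_of_mem_Icc hmeas h01 hindep ht.ne hpos) (exp_pos _)
    _ = exp (-t * a + (exp t - 1) * ∫ ω, ∑ i, X i ω ∂P) := (exp_add _ _).symm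

end UnitInterval

end ProbabilityTheory

/-- **Chernoff bound, lower tail.** If `X₁, …, X_k` are independent `[0,1]`-valued
random variables with `E[X₁ + ⋯ + X_k] ≥ μ`, `μ > 0` and `0 < ε < 1`, then
`P[X₁ + ⋯ + X_k ≤ (1−ε)·μ] < exp(−chern(−ε)·μ)`. -/
theorem chernoff_lower_tail
    {Ω : Type*} [MeasurableSpace Ω] (P : Measure Ω) [IsProbabilityMeasure P]
    (k : ℕ) (X : Fin k → Ω → ℝ) (hXmeas : ∀ i, Measurable (X i))
    (hX01 : ∀ i, ∀ᵐ ω ∂P, X i ω ∈ Set.Icc (0 : ℝ) 1)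
    (hindep : iIndepFun X P)
    (μ : ℝ) (hμ : 0 < μ) (hmean : μ ≤ ∫ ω, ∑ i, X i ω ∂P)
    (ε : ℝ) (hε0 : 0 < ε) (hε1 : ε < 1) :
    (P {ω | ∑ i, X i ω ≤ (1 - ε) * μ}).toReal < Real.exp (-(chern (-ε)) * μ) := by
  have h1ε : 0 < 1 - ε := by linarith
  have hexp : Real.exp (Real.log (1 - ε)) - 1 = -ε := by rw [Real.exp_log h1ε]; ring
  refine (measureReal_sum_le_lt_exp_of_mem_Icc hXmeas hX01 hindep
    (Real.log_neg h1ε (by linarith)) (hμ.trans_le hmean) ((1 - ε) * μ)).trans_le ?_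
  rw [hexp, Real.exp_le_exp, chern, sub_eq_add_neg 1 ε]
  nlinarith
end

section
/- A coupon-collector-type bound via Wald's inequality: Let Δ be a positive integer and let u_0, u_1, u_2, … be a nonincreasing sequence of ℕ-valued random variables with u_0 = Δ almost surely. Let T := min{t ≥ 1 : u_t = 0}, and suppose E[T] < ∞. Let p > 0 and suppose that for every t ≥ 1, almost surely on the event {T ≥ t}, E[(u_{t−1} − u_t)/u_{t−1} | σ(u_0, …, u_{t−1})] ≥ p (note u_{t−1} ≥ 1 on {T ≥ t}). Then E[T] ≤ H_Δ / p, where H_Δ := 1 + 1/2 + ⋯ + 1/Δ. -/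
/-!
Write `R_t := (u_t - u_{t+1}) / u_t`. Since `(a - b) / a ≤ H_a - H_b` for `b ≤ a`, the
ratios telescope: `∑_{t < N} R_t ≤ H_{u_0}`, which is `H_Δ` almost surely. The conditional
expectation of `R_t` is at least `p` on `{T > t}` and nonnegative everywhere, so
`p · P(T > t) ≤ E[R_t]` although `{T > t}` is not measurable for the conditioning σ-algebra. Summing over `t` and using
`E[T] = ∑_t P(T > t)` gives `p · E[T] ≤ H_Δ`.
-/

open MeasureTheory ProbabilityTheory
open scoped ENNReal

lemma div_le_harmonic_sub_harmonic {a b : ℕ} (h : b ≤ a) :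
    (a - b : ℚ) / a ≤ harmonic a - harmonic b := by
  induction a, h using Nat.le_induction with
  | base => simp
  | succ a hba ih =>
    rw [harmonic_succ]
    rcases Nat.eq_zero_or_pos a with rfl | ha
    · simp_all
    · have ha' : (0 : ℚ) < a := by exact_mod_cast ha
      calc ((a + 1 : ℕ) - b : ℚ) / (a + 1 : ℕ) = (a - b) / (a + 1) + (↑(a + 1))⁻¹ := by
            push_cast; field_simp; ring
        _ ≤ (a - b) / a + (↑(a + 1))⁻¹ := by
            gcongr
            · exact sub_nonneg.2 (by exact_mod_cast hba)
            · linarith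
        _ ≤ _ := by linarith

lemma harmonic_nonneg (n : ℕ) : 0 ≤ harmonic n :=
  Finset.sum_nonneg fun _ _ => by positivity

lemma sum_range_sub_div_le_harmonic {v : ℕ → ℕ} (hv : ∀ t, v (t + 1) ≤ v t) (N : ℕ) :
    ∑ t ∈ Finset.range N, ((v t : ℝ) - v (t + 1)) / v t ≤ harmonic (v 0) :=
  calc ∑ t ∈ Finset.range N, ((v t : ℝ) - v (t + 1)) / v t
      ≤ ∑ t ∈ Finset.range N, ((harmonic (v t) : ℝ) - harmonic (v (t + 1))) :=
        Finset.sum_le_sum fun t _ => by exact_mod_cast div_le_harmonic_sub_harmonic (hv t)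
    _ = harmonic (v 0) - harmonic (v N) := Finset.sum_range_sub' (fun t => (harmonic (v t) : ℝ)) N
    _ ≤ harmonic (v 0) := sub_le_self _ (by exact_mod_cast harmonic_nonneg _)

lemma natCast_sub_div_natCast_mem_Icc {a b : ℕ} (h : b ≤ a) :
    ((a : ℝ) - b) / a ∈ Set.Icc (0 : ℝ) 1 :=
  ⟨div_nonneg (sub_nonneg.2 (Nat.cast_le.2 h)) (Nat.cast_nonneg _),
    div_le_one_of_le₀ (sub_le_self _ (Nat.cast_nonneg _)) (Nat.cast_nonneg _)⟩

lemma measurable_sInf_setOf {Ω : Type*} [MeasurableSpace Ω] {q : ℕ → Ω → Prop}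
    (hq : ∀ k, MeasurableSet {ω | q k ω}) : Measurable fun ω => sInf {k | q k ω} := by
  refine measurable_of_Ioi fun n => ?_
  have : (fun ω => sInf {k | q k ω}) ⁻¹' Set.Ioi n =
      (⋃ k, {ω | q k ω}) ∩ ⋂ k ≤ n, {ω | q k ω}ᶜ := by
    ext ω
    simp only [Set.mem_preimage, Set.mem_Ioi, Set.mem_inter_iff, Set.mem_iUnion, Set.mem_iInter,
      Set.mem_compl_iff, Set.mem_ofPred_eq]
    constructor
    · intro h
      refine ⟨?_, fun k hk hqk => ?_⟩
      · by_contra! h'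
        simp [Set.eq_empty_of_forall_notMem (s := {k | q k ω}) h'] at h
      · have := Nat.sInf_le (s := {k | q k ω}) hqk
        omega
    · rintro ⟨hne, hlt⟩
      by_contra! h
      exact hlt _ h (Nat.sInf_mem hne)
  rw [this]
  exact (MeasurableSet.iUnion hq).inter
    (MeasurableSet.iInter fun k => MeasurableSet.iInter fun _ => (hq k).compl)

section
variable {Ω : Type*} {m₀ : MeasurableSpace Ω} {P : Measure Ω}

lemma lintegral_natCast_eq_tsum_measure_lt {T : Ω → ℕ} (hT : Measurable T) :
    ∫⁻ ω, (T ω : ℝ≥0∞) ∂P = ∑' t, P {ω | t < T ω} := by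
  have hsum : ∀ ω, (T ω : ℝ≥0∞) = ∑' t, {ω | t < T ω}.indicator 1 ω := by
    intro ω
    rw [tsum_eq_sum (s := Finset.range (T ω))]
    · simp [Set.indicator_apply, Finset.filter_true_of_mem]
    · intro t ht
      simp_all
  simp_rw [hsum]
  rw [lintegral_tsum fun t =>
    (measurable_one.indicator (measurableSet_lt measurable_const hT)).aemeasurable]
  simp_rw [lintegral_indicator_one (measurableSet_lt measurable_const hT)]

variable [IsFiniteMeasure P]

lemma integral_natCast_le_of_sum_measureReal_lt_le {T : Ω → ℕ} (hT : Measurable T) {C : ℝ}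
    (h : ∀ N, ∑ t ∈ Finset.range N, P.real {ω | t < T ω} ≤ C) :
    ∫ ω, (T ω : ℝ) ∂P ≤ C := by
  rw [integral_eq_lintegral_of_nonneg_ae (ae_of_all _ fun ω => Nat.cast_nonneg _)
    (measurable_from_nat.comp hT).aestronglyMeasurable]
  simp_rw [ENNReal.ofReal_natCast, lintegral_natCast_eq_tsum_measure_lt hT]
  refine ENNReal.toReal_le_of_le_ofReal (by simpa using h 0)
    (ENNReal.tsum_le_of_sum_range_le fun N => ?_)
  calc ∑ t ∈ Finset.range N, P {ω | t < T ω}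
      = ∑ t ∈ Finset.range N, ENNReal.ofReal (P.real {ω | t < T ω}) :=
        Finset.sum_congr rfl fun t _ => by rw [ofReal_measureReal]
    _ ≤ ENNReal.ofReal C := by
        rw [← ENNReal.ofReal_sum_of_nonneg fun _ _ => measureReal_nonneg]
        exact ENNReal.ofReal_le_ofReal (h N)

lemma mul_measureReal_le_integral_of_le_condExp {m : MeasurableSpace Ω} (hm : m ≤ m₀)
    {R : Ω → ℝ} (hR : 0 ≤ᵐ[P] R) {A : Set Ω} (hA : MeasurableSet[m₀] A) {p : ℝ}
    (hpA : ∀ᵐ ω ∂P, ω ∈ A → p ≤ P[R | m] ω) : p * P.real A ≤ ∫ ω, R ω ∂P :=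
  calc p * P.real A = ∫ ω, A.indicator (fun _ => p) ω ∂P := by
        rw [integral_indicator_const _ hA, smul_eq_mul, mul_comm]
    _ ≤ ∫ ω, P[R | m] ω ∂P := by
        refine integral_mono_ae ((integrable_const p).indicator hA) integrable_condExp ?_
        filter_upwards [hpA, condExp_nonneg hR] with ω hpω hRω
        by_cases hω : ω ∈ A
        · simpa [hω] using hpω hω
        · simpa [hω] using hRω
    _ = ∫ ω, R ω ∂P := integral_condExp hm

end

theorem coupon_collector_wald_general
    {Ω : Type*} [MeasurableSpace Ω] (P : Measure Ω) [IsProbabilityMeasure P]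
    (Δ : ℕ)
    (u : ℕ → Ω → ℕ) (humeas : ∀ t, Measurable (u t))
    (hmono : ∀ (t : ℕ) (ω : Ω), u (t + 1) ω ≤ u t ω)
    (hu0 : ∀ᵐ ω ∂P, u 0 ω = Δ)
    (T : Ω → ℕ)
    (hTdef : ∀ ω, T ω = sInf {t : ℕ | 1 ≤ t ∧ u t ω = 0})
    (p : ℝ) (hp : 0 < p)
    (hcond : ∀ t : ℕ, 1 ≤ t → ∀ᵐ ω ∂P, t ≤ T ω →
      p ≤ (P[fun ω' => ((u (t - 1) ω' : ℝ) - (u t ω' : ℝ)) / (u (t - 1) ω' : ℝ) |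
            ⨆ s ∈ Finset.range t, MeasurableSpace.comap (u s) inferInstance]) ω) :
    ∫ ω, (T ω : ℝ) ∂P ≤ (∑ i ∈ Finset.Icc 1 Δ, (1 : ℝ) / i) / p := by
  set R : ℕ → Ω → ℝ := fun t ω => ((u t ω : ℝ) - u (t + 1) ω) / u t ω
  have hT : Measurable T := funext hTdef ▸ measurable_sInf_setOf fun k =>
    (MeasurableSet.const (1 ≤ k)).inter (humeas k (measurableSet_singleton 0))
  have hR_mem : ∀ t ω, R t ω ∈ Set.Icc (0 : ℝ) 1 := fun t ω =>
    natCast_sub_div_natCast_mem_Icc (hmono t ω)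
  have hu_real : ∀ t, Measurable fun ω => (u t ω : ℝ) := fun t =>
    measurable_from_nat.comp (humeas t)
  have hR_int : ∀ t, Integrable (R t) P := fun t =>
    .of_mem_Icc 0 1 (((hu_real t).sub (hu_real (t + 1))).div (hu_real t)).aemeasurable
      (ae_of_all _ (hR_mem t))
  have hstep : ∀ t, p * P.real {ω | t < T ω} ≤ ∫ ω, R t ω ∂P := fun t =>
    mul_measureReal_le_integral_of_le_condExp (iSup₂_le fun s _ => (humeas s).comap_le)
      (ae_of_all _ fun ω => (hR_mem t ω).1) (measurableSet_lt measurable_const hT)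
      (by simpa using hcond (t + 1) (by omega))
  have hsum : ∀ N, ∑ t ∈ Finset.range N, ∫ ω, R t ω ∂P ≤ harmonic Δ := fun N => by
    rw [← integral_finsetSum _ fun t _ => hR_int t]
    refine (integral_mono_ae (integrable_finsetSum _ fun t _ => hR_int t)
      (integrable_const (harmonic Δ : ℝ)) ?_).trans_eq (by simp)
    filter_upwards [hu0] with ω hω
    simpa [hω] using sum_range_sub_div_le_harmonic (v := (u · ω)) (hmono · ω) N
  have hH : ∑ i ∈ Finset.Icc 1 Δ, (1 : ℝ) / i = harmonic Δ := by simp [harmonic_eq_sum_Icc]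
  rw [hH]
  refine integral_natCast_le_of_sum_measureReal_lt_le hT fun N => (le_div_iff₀' hp).2 ?_
  rw [Finset.mul_sum]
  exact (Finset.sum_le_sum fun t _ => hstep t).trans (hsum N)

/-- **A coupon-collector-type bound via Wald's inequality.** Let `Δ ≥ 1` and let
`u₀, u₁, u₂, …` be a nonincreasing sequence of `ℕ`-valued random variables with
`u₀ = Δ` a.s.  Let `T := min {t ≥ 1 : u_t = 0}` and suppose `E[T] < ∞`.  If
`p > 0` and for every `t ≥ 1`, a.s. on the event `{T ≥ t}`,
`E[(u_{t−1} − u_t)/u_{t−1} | σ(u₀, …, u_{t−1})] ≥ p`, then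
`E[T] ≤ H_Δ / p`, where `H_Δ = 1 + 1/2 + ⋯ + 1/Δ`. -/
theorem coupon_collector_wald
    {Ω : Type*} [MeasurableSpace Ω] (P : Measure Ω) [IsProbabilityMeasure P]
    (Δ : ℕ) (hΔ : 0 < Δ)
    (u : ℕ → Ω → ℕ) (humeas : ∀ t, Measurable (u t))
    (hmono : ∀ (t : ℕ) (ω : Ω), u (t + 1) ω ≤ u t ω)
    (hu0 : ∀ᵐ ω ∂P, u 0 ω = Δ)
    (T : Ω → ℕ)
    (hTdef : ∀ ω, T ω = sInf {t : ℕ | 1 ≤ t ∧ u t ω = 0})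
    (hhits : ∀ᵐ ω ∂P, ∃ t : ℕ, 1 ≤ t ∧ u t ω = 0)
    (hTint : Integrable (fun ω => (T ω : ℝ)) P)
    (p : ℝ) (hp : 0 < p)
    (hcond : ∀ t : ℕ, 1 ≤ t → ∀ᵐ ω ∂P, t ≤ T ω →
      p ≤ (P[fun ω' => ((u (t - 1) ω' : ℝ) - (u t ω' : ℝ)) / (u (t - 1) ω' : ℝ) |
            ⨆ s ∈ Finset.range t, MeasurableSpace.comap (u s) inferInstance]) ω) :
    ∫ ω, (T ω : ℝ) ∂P ≤ (∑ i ∈ Finset.Icc 1 Δ, (1 : ℝ) / i) / p :=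
  coupon_collector_wald_general P Δ u humeas hmono hu0 T hTdef p hp hcond
end

section
/- Weighted k-medians rounding guarantee (existence form): Consider a facility-location instance with a finite set F of facilities, a finite nonempty set C of n customers, costs cost : F → ℝ≥0, and distances dist : F × C → ℝ≥0. Let 0 < ε and d ≥ 0, k > 0, and suppose there exists a fractional solution x with facility cost cost(x) ≤ k and assignment cost dist(x) ≤ d. Then there exists a nonempty subset S ⊆ F of facilities with assignment cost dist(S) = Σ_{c ∈ C} min_{f ∈ S} dist(f,c) ≤ (1+ε)·d and facility cost cost(S) = Σ_{f ∈ S} cost(f) ≤ k·ln(n + n/ε) + max_{f ∈ F} cost(f). -/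
/-!
Cap every distance at `(1 + ε) d` and measure a set `S` of facilities by its excess: its capped
assignment cost minus the fractional assignment cost `D ≤ d`. Averaging the marginal gains of the
facilities with the weights `x f`, whose total cost is at most `k`, shows that some facility `f`
shrinks a positive excess by the factor `1 - cost f / k ≤ exp (-cost f / k)`. Adding such
facilities greedily, the excess falls from at most `n (1 + ε) d` below `ε d` after spending at most
`k ln (n + n / ε)` before the last facility. An excess below `ε d` means every customer is served
within the cap, so the true assignment cost is at most `D + ε d ≤ (1 + ε) d`. For `d = 0` the same
argument runs on the distances `[dist f c ≠ 0]`.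
-/

open Finset Real

section

variable {F C : Type*}

noncomputable def cappedDist (dist : F → C → ℝ) (cap : ℝ) (S : Finset F) (c : C) : ℝ :=
  S.fold min cap (dist · c)

section CappedDist

variable {dist : F → C → ℝ} {cap : ℝ} {S : Finset F} {c : C}

@[simp]
lemma cappedDist_empty : cappedDist dist cap ∅ c = cap := rfl

lemma cappedDist_insert [DecidableEq F] (f : F) :
    cappedDist dist cap (insert f S) c = min (dist f c) (cappedDist dist cap S c) :=
  fold_insert_idem

lemma cappedDist_nonneg (hdist : ∀ f c, 0 ≤ dist f c) (hcap : 0 ≤ cap) :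
    0 ≤ cappedDist dist cap S c :=
  (le_fold_min _).2 ⟨hcap, fun f _ => hdist f c⟩

lemma exists_mem_dist_lt_of_cappedDist_lt (h : cappedDist dist cap S c < cap) :
    ∃ f ∈ S, dist f c < cap :=
  ((fold_min_lt _).1 h).resolve_left (lt_irrefl cap)

lemma inf'_le_cappedDist (hS : S.Nonempty) (h : cappedDist dist cap S c < cap) :
    S.inf' hS (dist · c) ≤ cappedDist dist cap S c := by
  obtain ⟨f, hf, hlt⟩ := exists_mem_dist_lt_of_cappedDist_lt h
  exact (le_fold_min _).2 ⟨(inf'_le _ hf).trans hlt.le, fun g hg => inf'_le _ hg⟩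

end CappedDist

noncomputable def cappedCost [Fintype C] (dist : F → C → ℝ) (cap : ℝ) (S : Finset F) : ℝ :=
  ∑ c, cappedDist dist cap S c

structure IsFractionalSolution [Fintype F] (x : F → ℝ) (xa : F → C → ℝ) : Prop where
  nonneg : ∀ f, 0 ≤ x f
  assign_nonneg : ∀ f c, 0 ≤ xa f c
  assign_le : ∀ f c, xa f c ≤ x f
  sum_assign : ∀ c, ∑ f, xa f c = 1

theorem Finset.exists_mul_le_mul_of_sum_mul_le {ι : Type*} (s : Finset ι) {w a b : ι → ℝ}
    {k B : ℝ} (hw : ∀ i ∈ s, 0 ≤ w i) (hk : 0 < k) (hB : 0 < B)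
    (ha : ∑ i ∈ s, w i * a i ≤ k) (hb : B ≤ ∑ i ∈ s, w i * b i) :
    ∃ i ∈ s, a i * B ≤ k * b i := by
  by_contra! hlt
  obtain ⟨j, hj, hwb⟩ := exists_ne_zero_of_sum_ne_zero (hB.trans_le hb).ne'
  have hwj : 0 < w j := (hw j hj).lt_of_ne (left_ne_zero_of_mul hwb).symm
  have hsum : k * ∑ i ∈ s, w i * b i < B * ∑ i ∈ s, w i * a i := by
    simp only [mul_sum]
    refine sum_lt_sum (fun i hi => ?_) ⟨j, hj, ?_⟩
    · nlinarith [hlt i hi, hw i hi]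
    · nlinarith [hlt j hj]
  nlinarith

theorem exists_lt_and_sum_le_log_of_step [Fintype F] [DecidableEq F] {E : Finset F → ℝ}
    {cost : F → ℝ} {k t M : ℝ} (hk : 0 < k) (ht : 0 < t) (hM : ∀ f, cost f ≤ M)
    (hE : t ≤ E ∅) (step : ∀ S, t ≤ E S → ∃ f ∉ S, E (insert f S) ≤ E S * (1 - cost f / k)) :
    ∃ S, E S < t ∧ ∑ f ∈ S, cost f ≤ k * log (E ∅ / t) + M := by
  -- A largest set satisfying the invariant `P` is one greedy step away from `E < t`.
  set P : Finset F → Prop := fun S => t ≤ E S ∧ E S * exp ((∑ f ∈ S, cost f) / k) ≤ E ∅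
  obtain ⟨S, hS, hmax⟩ := (univ.filter P).exists_max_image card ⟨∅, by simp [P, hE]⟩
  simp only [mem_filter, mem_univ, true_and] at hS hmax
  obtain ⟨f, hfS, hf⟩ := step S hS.1
  have hinsert : E (insert f S) * exp ((∑ g ∈ insert f S, cost g) / k) ≤ E ∅ := by
    have hES : 0 ≤ E S := ht.le.trans hS.1
    have hdecay : E (insert f S) * exp (cost f / k) ≤ E S :=
      calc E (insert f S) * exp (cost f / k)
          ≤ E S * exp (-(cost f / k)) * exp (cost f / k) := by
            gcongr; exact hf.trans (by gcongr; exact one_sub_le_exp_neg _)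
        _ = E S := by rw [mul_assoc, ← exp_add, neg_add_cancel, exp_zero, mul_one]
    calc E (insert f S) * exp ((∑ g ∈ insert f S, cost g) / k)
        = E (insert f S) * exp (cost f / k) * exp ((∑ g ∈ S, cost g) / k) := by
          rw [sum_insert hfS, add_div, exp_add, mul_assoc]
      _ ≤ E S * exp ((∑ g ∈ S, cost g) / k) := by gcongr
      _ ≤ E ∅ := hS.2
  have hlt : E (insert f S) < t := by
    by_contra! h
    have := hmax _ ⟨h, hinsert⟩
    rw [card_insert_of_notMem hfS] at this
    omega
  have hcostS : ∑ g ∈ S, cost g ≤ k * log (E ∅ / t) := by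
    rw [← div_le_iff₀' hk, le_log_iff_exp_le (div_pos (ht.trans_le hE) ht), le_div_iff₀ ht]
    calc exp ((∑ g ∈ S, cost g) / k) * t ≤ E S * exp ((∑ g ∈ S, cost g) / k) := by
          rw [mul_comm]; gcongr; exact hS.1
      _ ≤ E ∅ := hS.2
  refine ⟨insert f S, hlt, ?_⟩
  rw [sum_insert hfS]
  linarith [hM f]

section CappedCost

variable [Fintype F] {cost : F → ℝ} {dist : F → C → ℝ} {x : F → ℝ}
  {xa : F → C → ℝ} {k : ℝ}

lemma cappedDist_sub_sum_le [DecidableEq F] (hx : IsFractionalSolution x xa) (cap : ℝ)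
    (S : Finset F) (c : C) :
    cappedDist dist cap S c - ∑ f, xa f c * dist f c ≤
      ∑ f, x f * (cappedDist dist cap S c - cappedDist dist cap (insert f S) c) := by
  set g := cappedDist dist cap S c
  calc g - ∑ f, xa f c * dist f c = ∑ f, xa f c * (g - dist f c) := by
        simp only [mul_sub, sum_sub_distrib, ← sum_mul, hx.sum_assign, one_mul]
    _ ≤ ∑ f, x f * (g - cappedDist dist cap (insert f S) c) := by
        refine sum_le_sum fun f _ => ?_
        rw [cappedDist_insert]
        calc xa f c * (g - dist f c) ≤ xa f c * (g - min (dist f c) g) := by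
              gcongr
              · exact hx.assign_nonneg f c
              · exact min_le_left _ _
          _ ≤ x f * (g - min (dist f c) g) := by
              gcongr
              · exact sub_nonneg.2 (min_le_right _ _)
              · exact hx.assign_le f c

lemma cappedCost_sub_sum_le [Fintype C] [DecidableEq F] (hx : IsFractionalSolution x xa)
    (cap : ℝ) (S : Finset F) :
    cappedCost dist cap S - ∑ f, ∑ c, xa f c * dist f c ≤
      ∑ f, x f * (cappedCost dist cap S - cappedCost dist cap (insert f S)) := by
  calc cappedCost dist cap S - ∑ f, ∑ c, xa f c * dist f c
      = ∑ c, (cappedDist dist cap S c - ∑ f, xa f c * dist f c) := by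
        rw [cappedCost, sum_comm, sum_sub_distrib]
    _ ≤ ∑ c, ∑ f, x f * (cappedDist dist cap S c - cappedDist dist cap (insert f S) c) :=
        sum_le_sum fun c _ => cappedDist_sub_sum_le hx cap S c
    _ = ∑ f, x f * (cappedCost dist cap S - cappedCost dist cap (insert f S)) := by
        rw [sum_comm]
        simp only [cappedCost, ← sum_sub_distrib, mul_sum]

theorem exists_cappedCost_insert_sub_le [Fintype C] [DecidableEq F]
    (hx : IsFractionalSolution x xa) (hcost : ∀ f, 0 ≤ cost f) (hk : 0 < k)
    (hxk : ∑ f, x f * cost f ≤ k) {cap : ℝ} {S : Finset F}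
    (hS : ∑ f, ∑ c, xa f c * dist f c < cappedCost dist cap S) :
    ∃ f ∉ S, cappedCost dist cap (insert f S) - ∑ f, ∑ c, xa f c * dist f c ≤
      (cappedCost dist cap S - ∑ f, ∑ c, xa f c * dist f c) * (1 - cost f / k) := by
  set B := cappedCost dist cap S - ∑ f, ∑ c, xa f c * dist f c
  set gain : F → ℝ := fun f => cappedCost dist cap S - cappedCost dist cap (insert f S)
  have hcost_out : ∑ f ∈ univ \ S, x f * cost f ≤ k :=
    (sum_le_sum_of_subset_of_nonneg (subset_univ _)
      fun f _ _ => mul_nonneg (hx.nonneg f) (hcost f)).trans hxk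
  have hgain_out : B ≤ ∑ f ∈ univ \ S, x f * gain f := by
    rw [sum_subset (subset_univ _) fun f _ hf => by
      simp [gain, insert_eq_of_mem (by simpa using hf : f ∈ S)]]
    exact cappedCost_sub_sum_le hx cap S
  obtain ⟨f, hf, hle⟩ := (univ \ S).exists_mul_le_mul_of_sum_mul_le
    (fun f _ => hx.nonneg f) hk (sub_pos.2 hS) hcost_out hgain_out
  refine ⟨f, (mem_sdiff.1 hf).2, ?_⟩
  have : cost f * B / k ≤ gain f := by rw [div_le_iff₀ hk]; linarith
  calc cappedCost dist cap (insert f S) - ∑ f, ∑ c, xa f c * dist f c = B - gain f := by ring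
    _ ≤ B - cost f * B / k := by linarith
    _ = B * (1 - cost f / k) := by ring

end CappedCost

section Rounding

variable [Fintype F] [Fintype C] [Nonempty C] {cost : F → ℝ} {dist : F → C → ℝ} {x : F → ℝ}
  {xa : F → C → ℝ} {k ε M : ℝ}

theorem exists_finset_sum_inf'_le_of_pos (hx : IsFractionalSolution x xa)
    (hcost : ∀ f, 0 ≤ cost f) (hdist : ∀ f c, 0 ≤ dist f c) (hM : ∀ f, cost f ≤ M)
    (hε : 0 < ε) (hk : 0 < k) {d : ℝ} (hd : 0 < d) (hxk : ∑ f, x f * cost f ≤ k)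
    (hxd : ∑ f, ∑ c, xa f c * dist f c ≤ d) :
    ∃ (S : Finset F) (hS : S.Nonempty), (∑ c, S.inf' hS fun f => dist f c) ≤ (1 + ε) * d ∧
      ∑ f ∈ S, cost f ≤ k * log ((Fintype.card C : ℝ) + (Fintype.card C : ℝ) / ε) + M := by
  classical
  set n : ℝ := (Fintype.card C : ℝ)
  set D := ∑ f, ∑ c, xa f c * dist f c
  set cap := (1 + ε) * d
  have hn : 1 ≤ n := Nat.one_le_cast.2 Fintype.card_pos
  have hD : 0 ≤ D := sum_nonneg fun f _ => sum_nonneg fun c _ =>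
    mul_nonneg (hx.assign_nonneg f c) (hdist f c)
  have hcap : 0 ≤ cap := by positivity
  have hεd : 0 < ε * d := mul_pos hε hd
  have hE : cappedCost dist cap ∅ - D = n * cap - D := by simp [cappedCost, n]
  obtain ⟨S, hS, hScost⟩ := exists_lt_and_sum_le_log_of_step
    (E := fun S => cappedCost dist cap S - D) hk hεd hM (by rw [hE]; nlinarith)
    fun S hS => exists_cappedCost_insert_sub_le hx hcost hk hxk (by linarith)
  have hlt : cappedCost dist cap S < cap := by linarith
  have hserved (c : C) : cappedDist dist cap S c < cap :=
    (single_le_sum (f := cappedDist dist cap S) (fun c _ => cappedDist_nonneg hdist hcap)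
      (mem_univ c)).trans_lt hlt
  obtain ⟨c⟩ := ‹Nonempty C›
  obtain ⟨f, hf, -⟩ := exists_mem_dist_lt_of_cappedDist_lt (hserved c)
  refine ⟨S, ⟨f, hf⟩, ?_, hScost.trans ?_⟩
  · exact (sum_le_sum fun c _ => inf'_le_cappedDist _ (hserved c)).trans hlt.le
  · have hratio : (n * cap - D) / (ε * d) ≤ n + n / ε := by
      rw [div_le_iff₀ hεd]
      field_simp
      nlinarith
    rw [hE]
    gcongr
    exact div_pos (by nlinarith) hεd

theorem exists_finset_sum_inf'_le_of_zero (hx : IsFractionalSolution x xa)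
    (hcost : ∀ f, 0 ≤ cost f) (hdist : ∀ f c, 0 ≤ dist f c) (hM : ∀ f, cost f ≤ M)
    (hε : 0 < ε) (hk : 0 < k) (hxk : ∑ f, x f * cost f ≤ k)
    (hxd : ∑ f, ∑ c, xa f c * dist f c ≤ 0) :
    ∃ (S : Finset F) (hS : S.Nonempty), (∑ c, S.inf' hS fun f => dist f c) ≤ 0 ∧
      ∑ f ∈ S, cost f ≤ k * log ((Fintype.card C : ℝ) + (Fintype.card C : ℝ) / ε) + M := by
  classical
  -- Rerun the positive case on 0/1 distances with `(1 + ε) d < 1`: every customer then has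
  -- a facility of `S` at distance `0`.
  set δ : F → C → ℝ := fun f c => if dist f c = 0 then 0 else 1
  have hδ (f : F) (c : C) : 0 ≤ δ f c := by dsimp only [δ]; split_ifs <;> norm_num
  have hxa_dist (f : F) (c : C) : xa f c * dist f c = 0 := by
    have hnonneg (f : F) (c : C) : 0 ≤ xa f c * dist f c :=
      mul_nonneg (hx.assign_nonneg f c) (hdist f c)
    have hf := (sum_eq_zero_iff_of_nonneg fun f _ => sum_nonneg fun c _ => hnonneg f c).1
      (hxd.antisymm (sum_nonneg fun f _ => sum_nonneg fun c _ => hnonneg f c)) f (mem_univ f)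
    exact (sum_eq_zero_iff_of_nonneg fun c _ => hnonneg f c).1 hf c (mem_univ c)
  have hxδ : ∑ f, ∑ c, xa f c * δ f c = 0 := by
    refine sum_eq_zero fun f _ => sum_eq_zero fun c _ => ?_
    by_cases h : dist f c = 0
    · simp [δ, h]
    · simp [(mul_eq_zero.1 (hxa_dist f c)).resolve_right h]
  have hd : 0 < (2 * (1 + ε))⁻¹ := by positivity
  obtain ⟨S, hS, hδS, hcostS⟩ := exists_finset_sum_inf'_le_of_pos hx hcost hδ hM hε hk hd hxk
    (hxδ.trans_le hd.le)
  refine ⟨S, hS, sum_nonpos fun c _ => ?_, hcostS⟩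
  have hδc : S.inf' hS (δ · c) < 1 :=
    calc S.inf' hS (δ · c) ≤ ∑ c, S.inf' hS (δ · c) :=
          single_le_sum (f := fun c => S.inf' hS (δ · c))
            (fun c _ => le_inf' hS _ fun f _ => hδ f c) (mem_univ c)
      _ ≤ (1 + ε) * (2 * (1 + ε))⁻¹ := hδS
      _ < 1 := by field_simp; linarith
  obtain ⟨f, hf, hδf⟩ := (inf'_lt_iff hS).1 hδc
  have : dist f c = 0 := by by_contra h; simp [δ, h] at hδf
  exact (inf'_le _ hf).trans this.le

end Rounding

end

/-- **Weighted k-medians rounding guarantee (existence form).**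
If a facility-location instance with `n ≥ 1` customers admits a fractional
solution of facility cost at most `k` and assignment cost at most `d`, then for
any `ε > 0` there is a nonempty set `S` of facilities with assignment cost at
most `(1+ε)·d` and facility cost at most `k·ln(n + n/ε) + max_f cost(f)`. -/
theorem weighted_k_medians_rounding_guarantee
    {F C : Type*} [Fintype F] [Fintype C] [Nonempty C]
    (cost : F → ℝ) (hcost : ∀ f, 0 ≤ cost f)
    (dist : F → C → ℝ) (hdist : ∀ f c, 0 ≤ dist f c)
    (ε d k : ℝ) (hε : 0 < ε) (hd : 0 ≤ d) (hk : 0 < k)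
    (hfrac : ∃ (x : F → ℝ) (xa : F → C → ℝ),
      (∀ f, x f ∈ Set.Icc (0 : ℝ) 1) ∧
      (∀ f c, 0 ≤ xa f c) ∧
      (∀ f c, xa f c ≤ x f) ∧
      (∀ c, ∑ f, xa f c = 1) ∧
      (∑ f, x f * cost f ≤ k) ∧
      (∑ f, ∑ c, xa f c * dist f c ≤ d)) :
    ∃ (S : Finset F) (hS : S.Nonempty),
      (∑ c, S.inf' hS fun f => dist f c) ≤ (1 + ε) * d ∧
      (∑ f ∈ S, cost f) ≤
        k * Real.log ((Fintype.card C : ℝ) + (Fintype.card C : ℝ) / ε) +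
          ⨆ f : F, cost f := by
  obtain ⟨x, xa, hx01, hxa, hxa_le, hxa_sum, hxk, hxd⟩ := hfrac
  have hx : IsFractionalSolution x xa := ⟨fun f => (hx01 f).1, hxa, hxa_le, hxa_sum⟩
  have hM (f : F) : cost f ≤ ⨆ f, cost f := le_ciSup (Set.finite_range cost).bddAbove f
  rcases hd.eq_or_lt with rfl | hd
  · obtain ⟨S, hS, hdistS, hcostS⟩ :=
      exists_finset_sum_inf'_le_of_zero hx hcost hdist hM hε hk hxk hxd
    exact ⟨S, hS, by rwa [mul_zero], hcostS⟩
  · exact exists_finset_sum_inf'_le_of_pos hx hcost hdist hM hε hk hd hxk hxd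
end

section
/- Fractional k-medians sparsification (existence form of the rounding guarantee): Consider an unweighted k-medians instance with a finite set F of facilities, a finite nonempty set C of n customers, distances dist : F × C → ℝ≥0, and cost(f) = 1 for every facility. Let 0 < ε < 1, let k be a positive integer, d ≥ 0, and suppose there exists a fractional solution x* with Σ_f x*(f) ≤ k and assignment cost dist(x*) ≤ d. Let N ≥ ln(n/ε)/chern(−ε) be such that N·k is an integer. Then there exist nonnegative reals x̂(f) and x̂(f,c), each an integer multiple of 1/((1−ε)·N), satisfying x̂(f,c) ≤ x̂(f) for all f, c and Σ_f x̂(f,c) ≥ 1 for every customer c, with Σ_f x̂(f) ≤ (1−ε)^{-1}·k and Σ_{f,c} x̂(f,c)·dist(f,c) ≤ (1−ε)^{-2}·d. -/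
open Finset Real

section ProductWeight

variable {ι α R : Type*} [Fintype ι] [Fintype α] [DecidableEq ι] [CommSemiring R]

theorem sum_pi_prod_eq_one (q : ι → α → R) (hq : ∀ i, ∑ a, q i a = 1) :
    ∑ ω : ι → α, ∏ i, q i (ω i) = 1 := by
  rw [← Fintype.prod_sum]
  simp [hq]

theorem sum_pi_prod_mul_apply (q : ι → α → R) (hq : ∀ i, ∑ a, q i a = 1) (j : ι) (g : α → R) :
    ∑ ω : ι → α, (∏ i, q i (ω i)) * g (ω j) = ∑ a, q j a * g a := by
  have hfactor (ω : ι → α) :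
      (∏ i, q i (ω i)) * g (ω j) = ∏ i, q i (ω i) * if i = j then g (ω i) else 1 := by
    rw [prod_mul_distrib, prod_ite_eq' univ j, if_pos (mem_univ j)]
  simp_rw [hfactor]
  rw [← Fintype.prod_sum fun i a => q i a * if i = j then g a else 1]
  simp_rw [mul_ite, mul_one, sum_ite_irrel, hq]
  simp

theorem sum_pi_prod_mul_pow_card_filter (q : α → R) (S : α → Prop) [DecidablePred S] (r : R) :
    ∑ ω : ι → α, (∏ i, q (ω i)) * r ^ #{i | S (ω i)} =
      (∑ a, q a * if S a then r else 1) ^ Fintype.card ι := by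
  have hfactor (ω : ι → α) : (∏ i, q (ω i)) * r ^ #{i | S (ω i)} =
      ∏ i, q (ω i) * if S (ω i) then r else 1 := by
    rw [prod_mul_distrib, prod_ite, prod_const, prod_const_one, mul_one]
  simp_rw [hfactor]
  rw [← Fintype.prod_sum fun _ a => q a * if S a then r else 1, prod_const, card_univ]

theorem sum_pi_prod_mul_card_filter (q : α → R) (hq : ∑ a, q a = 1) (S : α → Prop)
    [DecidablePred S] :
    ∑ ω : ι → α, (∏ i, q (ω i)) * #{i | S (ω i)} = Fintype.card ι * ∑ a with S a, q a := by
  simp_rw [natCast_card_filter, mul_sum]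
  rw [sum_comm, sum_congr rfl fun j _ =>
    sum_pi_prod_mul_apply (fun _ => q) (fun _ => hq) j fun a => if S a then 1 else 0]
  simp [← sum_filter, mul_sum]

end ProductWeight

theorem chern_neg_pos {ε : ℝ} (h0 : 0 < ε) (h1 : ε < 1) : 0 < chern (-ε) := by
  have hpos : 0 < 1 - ε := by linarith
  have hlog : -log (1 - ε) < (1 - ε)⁻¹ - 1 := by
    rw [← log_inv]
    exact log_lt_sub_one_of_pos (inv_pos.2 hpos) (by rw [Ne, inv_eq_one]; linarith)
  have hε : (1 - ε) * ((1 - ε)⁻¹ - 1) = ε := by field_simp; ring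
  rw [chern, show 1 + -ε = 1 - ε by ring]
  nlinarith [mul_lt_mul_of_pos_left hlog hpos]

theorem sum_prod_filter_card_lt_le_exp_chern {ι α : Type*} [Fintype ι] [Fintype α]
    [DecidableEq ι] (q : α → ℝ) (hq0 : ∀ a, 0 ≤ q a) (hq1 : ∑ a, q a = 1)
    (S : α → Prop) [DecidablePred S] {p : ℝ} (hp : ∑ a with S a, q a = p)
    {ε : ℝ} (hε0 : 0 < ε) (hε1 : ε < 1) :
    ∑ ω : ι → α with (#{i | S (ω i)} : ℝ) < (1 - ε) * (Fintype.card ι * p), ∏ i, q (ω i) ≤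
      exp (-(Fintype.card ι * p * chern (-ε))) := by
  set μ := Fintype.card ι * p
  have hθ : 0 < 1 - ε := by linarith
  have hp1 : p ≤ 1 := hp ▸ hq1 ▸ sum_le_sum_of_subset_of_nonneg (filter_subset _ _)
    fun a _ _ => hq0 a
  have hmgf : ∑ ω : ι → α, (∏ i, q (ω i)) * (1 - ε) ^ #{i | S (ω i)} =
      (1 - ε * p) ^ Fintype.card ι := by
    have hsplit (a : α) : q a * (if S a then 1 - ε else 1) = q a - ε * if S a then q a else 0 := by
      split_ifs <;> ring
    rw [sum_pi_prod_mul_pow_card_filter]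
    simp_rw [hsplit, sum_sub_distrib, ← mul_sum, ← sum_filter, hq1, hp]
  have hmgf_le : (1 - ε * p) ^ Fintype.card ι ≤ exp (-(ε * μ)) := by
    calc (1 - ε * p) ^ Fintype.card ι ≤ exp (-(ε * p)) ^ Fintype.card ι := by
          gcongr
          · nlinarith [hp ▸ sum_nonneg fun a (_ : a ∈ univ.filter S) => hq0 a]
          · linarith [add_one_le_exp (-(ε * p))]
      _ = exp (-(ε * μ)) := by rw [← exp_nat_mul, mul_neg, mul_left_comm]
  -- Markov's inequality for `(1 - ε) ^ X`, which is decreasing in `X`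
  have hmarkov : (∑ ω : ι → α with (#{i | S (ω i)} : ℝ) < (1 - ε) * μ, ∏ i, q (ω i)) *
      exp ((1 - ε) * μ * log (1 - ε)) ≤ (1 - ε * p) ^ Fintype.card ι := by
    rw [← hmgf, sum_mul]
    refine (sum_le_sum fun ω hω => ?_).trans (sum_le_sum_of_subset_of_nonneg (filter_subset _ _)
      fun ω _ _ => mul_nonneg (prod_nonneg fun i _ => hq0 _) (pow_nonneg hθ.le _))
    refine mul_le_mul_of_nonneg_left ?_ (prod_nonneg fun i _ => hq0 _)
    rw [← exp_log hθ, ← exp_nat_mul, exp_log hθ]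
    exact exp_le_exp.2 (mul_le_mul_of_nonpos_right (mem_filter.1 hω).2.le
      (log_nonpos hθ.le (by linarith)))
  calc _ ≤ exp (-(ε * μ)) / exp ((1 - ε) * μ * log (1 - ε)) :=
        (le_div_iff₀ (exp_pos _)).2 (hmarkov.trans hmgf_le)
    _ = exp (-(μ * chern (-ε))) := by
        rw [← exp_sub, chern]; ring_nf

theorem card_mul_exp_neg_mul_chern_le {n ε N : ℝ} (hn : 0 < n) (hε0 : 0 < ε) (hε1 : ε < 1)
    (hN : log (n / ε) / chern (-ε) ≤ N) : n * exp (-(N * chern (-ε))) ≤ ε := by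
  have hlog : log (n / ε) ≤ N * chern (-ε) := (div_le_iff₀ (chern_neg_pos hε0 hε1)).1 hN
  calc _ ≤ n * exp (-log (n / ε)) := by gcongr
    _ = ε := by rw [exp_neg, exp_log (by positivity)]; field_simp

section FiniteProbability

variable {Ω : Type*} [Fintype Ω] {p : Ω → ℝ}

theorem sum_filter_exists_le_sum {κ : Type*} [Fintype κ] (hp : ∀ ω, 0 ≤ p ω) (B : κ → Ω → Prop)
    [∀ c, DecidablePred (B c)] [DecidablePred fun ω => ∃ c, B c ω] :
    ∑ ω with ∃ c, B c ω, p ω ≤ ∑ c, ∑ ω with B c ω, p ω := by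
  simp_rw [sum_filter]
  rw [sum_comm]
  refine sum_le_sum fun ω _ => ?_
  have hterm (c : κ) : 0 ≤ if B c ω then p ω else 0 := by split_ifs <;> simp [hp ω]
  split_ifs with h
  · obtain ⟨c, hc⟩ := h
    simpa [hc] using single_le_sum (fun c _ => hterm c) (mem_univ c)
  · exact sum_nonneg fun c _ => hterm c

theorem exists_mem_le_sum_mul_div (hp : ∀ ω, 0 ≤ p ω) {g : Ω → ℝ} (hg : ∀ ω, 0 ≤ g ω)
    {G : Finset Ω} {a : ℝ} (ha : 0 < a) (hG : a ≤ ∑ ω ∈ G, p ω) :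
    ∃ ω ∈ G, g ω ≤ (∑ ω, p ω * g ω) / a := by
  obtain ⟨ω, hω, hmin⟩ := G.exists_min_image g (nonempty_of_sum_ne_zero (f := p) (by linarith))
  refine ⟨ω, hω, (le_div_iff₀ ha).2 ?_⟩
  calc g ω * a ≤ g ω * ∑ ω ∈ G, p ω := mul_le_mul_of_nonneg_left hG (hg ω)
    _ ≤ ∑ ω' ∈ G, p ω' * g ω' := by
        rw [mul_sum]; exact sum_le_sum fun ω' hω' => by nlinarith [hmin ω' hω', hp ω']
    _ ≤ ∑ ω, p ω * g ω :=
        sum_le_sum_of_subset_of_nonneg (subset_univ _) fun ω _ _ => mul_nonneg (hp ω) (hg ω)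

end FiniteProbability

theorem sum_filter_isSome_eq_sum_sum_filter_eq_some {β F M : Type*} [Fintype F] [DecidableEq F]
    [AddCommMonoid M] (s : Finset β) (g : β → Option F) (h : β → M) :
    ∑ b ∈ s with (g b).isSome, h b = ∑ f, ∑ b ∈ s with g b = some f, h b := by
  simp_rw [sum_filter]
  rw [sum_comm]
  refine sum_congr rfl fun b _ => ?_
  cases g b <;> simp

theorem card_filter_isSome_eq_sum_card_filter_eq_some {β F : Type*} [Fintype F] [DecidableEq F]
    (s : Finset β) (g : β → Option F) :
    #{b ∈ s | (g b).isSome} = ∑ f, #{b ∈ s | g b = some f} := by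
  simp only [card_eq_sum_ones]
  exact sum_filter_isSome_eq_sum_sum_filter_eq_some s g fun _ => 1

section RoundOutcome

variable {F C ι : Type*}

def assignedTo (r : Option (F × (C → Bool))) (c : C) : Option F :=
  r.bind fun fa => if fa.2 c then some fa.1 else none

theorem map_fst_eq_of_assignedTo_eq_some {r : Option (F × (C → Bool))} {c : C} {f : F}
    (h : assignedTo r c = some f) : r.map Prod.fst = some f := by
  rcases r with _ | ⟨g, a⟩ <;> simp_all [assignedTo]

variable [Fintype ι] [DecidableEq F]

def openCount (ω : ι → Option (F × (C → Bool))) (f : F) : ℕ :=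
  #{t | (ω t).map Prod.fst = some f}

def assignCount (ω : ι → Option (F × (C → Bool))) (f : F) (c : C) : ℕ :=
  #{t | assignedTo (ω t) c = some f}

theorem assignCount_le_openCount (ω : ι → Option (F × (C → Bool))) (f : F) (c : C) :
    assignCount ω f c ≤ openCount ω f :=
  card_le_card (monotone_filter_right _ fun _ _ => map_fst_eq_of_assignedTo_eq_some)

variable [Fintype F]

theorem sum_openCount_le (ω : ι → Option (F × (C → Bool))) :
    ∑ f, openCount ω f ≤ Fintype.card ι := by
  simp only [openCount]
  rw [← card_filter_isSome_eq_sum_card_filter_eq_some]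
  exact card_filter_le _ _

theorem sum_assignCount (ω : ι → Option (F × (C → Bool))) (c : C) :
    ∑ f, assignCount ω f c = #{t | (assignedTo (ω t) c).isSome} :=
  (card_filter_isSome_eq_sum_card_filter_eq_some _ _).symm

end RoundOutcome

section RoundWeight

variable {F C : Type*} [Fintype F] [Fintype C]

noncomputable def coinWeight (p : ℝ) (b : Bool) : ℝ := if b then p else 1 - p

theorem sum_coinWeight (p : ℝ) : ∑ b, coinWeight p b = 1 := by simp [coinWeight]

theorem sum_pi_prod_coinWeight_mul_boole [DecidableEq C] (A : C → ℝ) (c : C) :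
    ∑ a : C → Bool, (∏ c', coinWeight (A c') (a c')) * (if a c then 1 else 0) = A c := by
  rw [sum_pi_prod_mul_apply (fun c' => coinWeight (A c')) (fun _ => sum_coinWeight _) c
    fun b => if b then 1 else 0]
  simp [coinWeight]

/-- One sampling round: `none` opens nothing; `some (f, a)` opens `f` and assigns to it the
customers `c` with `a c`, each independently with probability `xa f c / x f`
(which is `0` when `x f = 0`). -/
noncomputable def roundWeight (x : F → ℝ) (xa : F → C → ℝ) (k : ℝ) :
    Option (F × (C → Bool)) → ℝ
  | none => 1 - (∑ f, x f) / k
  | some (f, a) => x f / k * ∏ c, coinWeight (xa f c / x f) (a c)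

variable {x : F → ℝ} {xa : F → C → ℝ} {k : ℝ}

theorem roundWeight_nonneg (hx : ∀ f, 0 ≤ x f) (hxa : ∀ f c, 0 ≤ xa f c)
    (hxax : ∀ f c, xa f c ≤ x f) (hk : 0 < k) (hxk : ∑ f, x f ≤ k) (r : Option (F × (C → Bool))) :
    0 ≤ roundWeight x xa k r := by
  rcases r with _ | ⟨f, a⟩
  · simpa [roundWeight, div_le_one hk] using hxk
  · refine mul_nonneg (div_nonneg (hx f) hk.le) (prod_nonneg fun c _ => ?_)
    have h0 : 0 ≤ xa f c / x f := div_nonneg (hxa f c) (hx f)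
    have h1 : xa f c / x f ≤ 1 := div_le_one_of_le₀ (hxax f c) (hx f)
    cases a c <;> simp [coinWeight, h0, h1]

theorem sum_roundWeight [DecidableEq C] : ∑ r, roundWeight x xa k r = 1 := by
  simp [Fintype.sum_option, Fintype.sum_prod_type, roundWeight, ← mul_sum,
    sum_pi_prod_eq_one (fun c => coinWeight (xa _ c / x _)) fun _ => sum_coinWeight _,
    ← sum_div]

theorem sum_roundWeight_filter_assignedTo_eq_some [DecidableEq F] [DecidableEq C]
    (hxa : ∀ f c, 0 ≤ xa f c) (hxax : ∀ f c, xa f c ≤ x f) (f : F) (c : C) :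
    ∑ r with assignedTo r c = some f, roundWeight x xa k r = xa f c / k := by
  have hround (g : F) (a : C → Bool) :
      (if assignedTo (some (g, a)) c = some f then roundWeight x xa k (some (g, a)) else 0) =
        if g = f then x g / k * ((∏ c', coinWeight (xa g c' / x g) (a c')) *
          if a c then 1 else 0) else 0 := by
    by_cases hg : g = f <;> cases hac : a c <;> simp [assignedTo, roundWeight, hg, hac]
  have hcancel : x f / k * (xa f c / x f) = xa f c / k := by
    rcases eq_or_ne (x f) 0 with h | h
    · simp [h, le_antisymm (h ▸ hxax f c) (hxa f c)]
    · field_simp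
  rw [sum_filter, Fintype.sum_option, Fintype.sum_prod_type]
  simp_rw [hround, sum_ite_irrel, sum_const_zero, ← mul_sum, sum_pi_prod_coinWeight_mul_boole]
  simp [assignedTo, hcancel]

theorem sum_roundWeight_filter_assignedTo_isSome [DecidableEq C] (hxa : ∀ f c, 0 ≤ xa f c)
    (hxax : ∀ f c, xa f c ≤ x f) (hcov : ∀ c, ∑ f, xa f c = 1) (c : C) :
    ∑ r with (assignedTo r c).isSome, roundWeight x xa k r = 1 / k := by
  classical
  simp_rw [sum_filter_isSome_eq_sum_sum_filter_eq_some,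
    sum_roundWeight_filter_assignedTo_eq_some hxa hxax, ← sum_div, hcov]

theorem sum_prod_roundWeight_mul_assignCost {ι : Type*} [Fintype ι] [DecidableEq ι]
    [DecidableEq F] [DecidableEq C] (hxa : ∀ f c, 0 ≤ xa f c) (hxax : ∀ f c, xa f c ≤ x f)
    (dist : F → C → ℝ) :
    ∑ ω : ι → Option (F × (C → Bool)), (∏ t, roundWeight x xa k (ω t)) *
        ∑ f, ∑ c, assignCount ω f c * dist f c =
      Fintype.card ι * (∑ f, ∑ c, xa f c * dist f c) / k := by
  have hq1 : ∑ r, roundWeight x xa k r = 1 := sum_roundWeight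
  have hterm (f : F) (c : C) : ∑ ω : ι → Option (F × (C → Bool)),
      (∏ t, roundWeight x xa k (ω t)) * assignCount ω f c = Fintype.card ι * (xa f c / k) := by
    rw [← sum_roundWeight_filter_assignedTo_eq_some hxa hxax f c]
    exact sum_pi_prod_mul_card_filter _ hq1 fun r => assignedTo r c = some f
  calc _ = ∑ f, ∑ c, (∑ ω : ι → Option (F × (C → Bool)),
        (∏ t, roundWeight x xa k (ω t)) * assignCount ω f c) * dist f c := by
        simp_rw [mul_sum, sum_mul, mul_assoc]
        rw [sum_comm]
        exact sum_congr rfl fun f _ => sum_comm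
    _ = _ := by
        simp_rw [hterm, mul_sum, sum_div]
        exact sum_congr rfl fun f _ => sum_congr rfl fun c _ => by ring

end RoundWeight

theorem exists_nat_rounding {F C : Type*} [Fintype F] [Fintype C] (dist : F → C → ℝ)
    (hdist : ∀ f c, 0 ≤ dist f c) {x : F → ℝ} {xa : F → C → ℝ} (hx : ∀ f, 0 ≤ x f)
    (hxa : ∀ f c, 0 ≤ xa f c) (hxax : ∀ f c, xa f c ≤ x f) (hcov : ∀ c, ∑ f, xa f c = 1)
    {k : ℝ} (hk : 0 < k) (hxk : ∑ f, x f ≤ k) {ε : ℝ} (hε0 : 0 < ε) (hε1 : ε < 1)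
    (T : ℕ) {N : ℝ} (hT : (T : ℝ) = N * k)
    (hN : Fintype.card C * exp (-(N * chern (-ε))) ≤ ε) :
    ∃ (z : F → ℕ) (w : F → C → ℕ), (∀ f c, w f c ≤ z f) ∧ ∑ f, z f ≤ T ∧
      (∀ c, (1 - ε) * N ≤ ∑ f, (w f c : ℝ)) ∧
      ∑ f, ∑ c, (w f c : ℝ) * dist f c ≤ N * (∑ f, ∑ c, xa f c * dist f c) / (1 - ε) := by
  classical
  set P : (Fin T → Option (F × (C → Bool))) → ℝ := fun ω => ∏ t, roundWeight x xa k (ω t)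
  have hP0 (ω) : 0 ≤ P ω := prod_nonneg fun t _ => roundWeight_nonneg hx hxa hxax hk hxk _
  have hmean : N = Fintype.card (Fin T) * (1 / k) := by
    rw [Fintype.card_fin, hT]; field_simp
  set covered : (Fin T → Option (F × (C → Bool))) → C → ℕ :=
    fun ω c => #{t | (assignedTo (ω t) c).isSome}
  have hmiss (c : C) :
      ∑ ω with (covered ω c : ℝ) < (1 - ε) * N, P ω ≤ exp (-(N * chern (-ε))) := by
    rw [hmean]
    exact sum_prod_filter_card_lt_le_exp_chern _ (roundWeight_nonneg hx hxa hxax hk hxk)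
      sum_roundWeight _ (sum_roundWeight_filter_assignedTo_isSome hxa hxax hcov c) hε0 hε1
  have hgood : 1 - ε ≤ ∑ ω with ∀ c, (1 - ε) * N ≤ covered ω c, P ω := by
    have hunion := sum_filter_exists_le_sum hP0 fun c ω => (covered ω c : ℝ) < (1 - ε) * N
    have hsplit := sum_filter_add_sum_filter_not univ (fun ω => ∀ c, (1 - ε) * N ≤ covered ω c) P
    rw [sum_pi_prod_eq_one _ fun _ => sum_roundWeight] at hsplit
    simp only [not_forall, not_le] at hsplit
    have := (hunion.trans (sum_le_sum fun c _ => hmiss c)).trans_eq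
      (by rw [sum_const, card_univ, nsmul_eq_mul])
    linarith
  obtain ⟨ω, hω, hcost⟩ := exists_mem_le_sum_mul_div hP0
    (g := fun ω => ∑ f, ∑ c, (assignCount ω f c : ℝ) * dist f c)
    (fun ω => sum_nonneg fun f _ => sum_nonneg fun c _ => mul_nonneg (by positivity) (hdist f c))
    (by linarith) hgood
  refine ⟨openCount ω, assignCount ω, assignCount_le_openCount ω, ?_, fun c => ?_, ?_⟩
  · simpa using sum_openCount_le ω
  · simpa only [covered, ← sum_assignCount, Nat.cast_sum] using (mem_filter.1 hω).2 c
  · rwa [sum_prod_roundWeight_mul_assignCost hxa hxax, Fintype.card_fin, hT, mul_comm N,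
      mul_assoc, mul_div_cancel_left₀ _ hk.ne'] at hcost

theorem fractional_k_medians_sparsification_general
    {F C : Type*} [Fintype F] [Fintype C] [Nonempty C]
    (dist : F → C → ℝ) (hdist : ∀ f c, 0 ≤ dist f c)
    (ε : ℝ) (hε0 : 0 < ε) (hε1 : ε < 1)
    (k : ℕ) (hk : 0 < k) (d : ℝ)
    (hfrac : ∃ (x : F → ℝ) (xa : F → C → ℝ),
      (∀ f, 0 ≤ x f) ∧
      (∀ f c, 0 ≤ xa f c) ∧
      (∀ f c, xa f c ≤ x f) ∧
      (∀ c, ∑ f, xa f c = 1) ∧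
      (∑ f, x f ≤ (k : ℝ)) ∧
      (∑ f, ∑ c, xa f c * dist f c ≤ d))
    (N : ℝ)
    (hN : Real.log ((Fintype.card C : ℝ) / ε) / chern (-ε) ≤ N)
    (hNk : ∃ z : ℤ, N * (k : ℝ) = (z : ℝ)) :
    ∃ (xh : F → ℝ) (xha : F → C → ℝ),
      (∀ f, 0 ≤ xh f ∧ ∃ z : ℤ, xh f = (z : ℝ) / ((1 - ε) * N)) ∧
      (∀ f c, 0 ≤ xha f c ∧ ∃ z : ℤ, xha f c = (z : ℝ) / ((1 - ε) * N)) ∧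
      (∀ f c, xha f c ≤ xh f) ∧
      (∀ c, 1 ≤ ∑ f, xha f c) ∧
      (∑ f, xh f ≤ (1 - ε)⁻¹ * (k : ℝ)) ∧
      (∑ f, ∑ c, xha f c * dist f c ≤ ((1 - ε)⁻¹) ^ 2 * d) := by
  obtain ⟨x, xa, hx, hxa, hxax, hcov, hxk, hxd⟩ := hfrac
  obtain ⟨Z, hZ⟩ := hNk
  have hk' : (0 : ℝ) < k := Nat.cast_pos.2 hk
  have hθ : 0 < 1 - ε := by linarith
  have hN0 : 0 < N := by
    have hlog : 0 < log (Fintype.card C / ε) :=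
      log_pos ((one_lt_div hε0).2 (hε1.trans_le (Nat.one_le_cast.2 Fintype.card_pos)))
    exact (div_pos hlog (chern_neg_pos hε0 hε1)).trans_le hN
  lift Z to ℕ using by exact_mod_cast hZ ▸ (mul_pos hN0 hk').le with T
  have hmiss := card_mul_exp_neg_mul_chern_le (Nat.cast_pos.2 Fintype.card_pos) hε0 hε1 hN
  obtain ⟨z, w, hwz, hz, hw, hcost⟩ := exists_nat_rounding dist hdist hx hxa hxax hcov hk' hxk
    hε0 hε1 T (by exact_mod_cast hZ.symm) hmiss
  have hM : 0 < (1 - ε) * N := mul_pos hθ hN0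
  refine ⟨fun f => z f / ((1 - ε) * N), fun f c => w f c / ((1 - ε) * N),
    fun f => ⟨by positivity, z f, rfl⟩, fun f c => ⟨by positivity, w f c, rfl⟩,
    fun f c => div_le_div_of_nonneg_right (by exact_mod_cast hwz f c) hM.le, fun c => ?_, ?_, ?_⟩
  · rw [← sum_div, le_div_iff₀ hM, one_mul]
    exact hw c
  · rw [← sum_div, div_le_iff₀ hM]
    calc (∑ f, (z f : ℝ)) ≤ N * k := hZ ▸ by exact_mod_cast hz
      _ = (1 - ε)⁻¹ * k * ((1 - ε) * N) := by field_simp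
  · simp_rw [div_mul_eq_mul_div, ← sum_div]
    rw [div_le_iff₀ hM]
    calc _ ≤ N * (∑ f, ∑ c, xa f c * dist f c) / (1 - ε) := hcost
      _ ≤ N * d / (1 - ε) := by gcongr
      _ = (1 - ε)⁻¹ ^ 2 * d * ((1 - ε) * N) := by field_simp

/-- **Fractional k-medians sparsification (existence form).**
For an unweighted k-medians instance (every facility has cost 1) with `n ≥ 1`
customers admitting a fractional solution `x*` with `Σ_f x*(f) ≤ k` and
assignment cost at most `d`, and any `N ≥ ln(n/ε)/chern(−ε)` with `N·k` an
integer, there is a fractional cover `(xh, xha)` whose values are integer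
multiples of `1/((1−ε)·N)`, with `Σ_f xh(f) ≤ (1−ε)⁻¹·k` and assignment cost
at most `(1−ε)⁻²·d`. -/
theorem fractional_k_medians_sparsification
    {F C : Type*} [Fintype F] [Fintype C] [Nonempty C]
    (dist : F → C → ℝ) (hdist : ∀ f c, 0 ≤ dist f c)
    (ε : ℝ) (hε0 : 0 < ε) (hε1 : ε < 1)
    (k : ℕ) (hk : 0 < k) (d : ℝ) (hd : 0 ≤ d)
    (hfrac : ∃ (x : F → ℝ) (xa : F → C → ℝ),
      (∀ f, 0 ≤ x f) ∧
      (∀ f c, 0 ≤ xa f c) ∧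
      (∀ f c, xa f c ≤ x f) ∧
      (∀ c, ∑ f, xa f c = 1) ∧
      (∑ f, x f ≤ (k : ℝ)) ∧
      (∑ f, ∑ c, xa f c * dist f c ≤ d))
    (N : ℝ)
    (hN : Real.log ((Fintype.card C : ℝ) / ε) / chern (-ε) ≤ N)
    (hNk : ∃ z : ℤ, N * (k : ℝ) = (z : ℝ)) :
    ∃ (xh : F → ℝ) (xha : F → C → ℝ),
      (∀ f, 0 ≤ xh f ∧ ∃ z : ℤ, xh f = (z : ℝ) / ((1 - ε) * N)) ∧
      (∀ f c, 0 ≤ xha f c ∧ ∃ z : ℤ, xha f c = (z : ℝ) / ((1 - ε) * N)) ∧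
      (∀ f c, xha f c ≤ xh f) ∧
      (∀ c, 1 ≤ ∑ f, xha f c) ∧
      (∑ f, xh f ≤ (1 - ε)⁻¹ * (k : ℝ)) ∧
      (∑ f, ∑ c, xha f c * dist f c ≤ ((1 - ε)⁻¹) ^ 2 * d) :=
  fractional_k_medians_sparsification_general dist hdist ε hε0 hε1 k hk d hfrac N hN hNk
end

section
/- Fractional facility-location guarantee (existence form): Consider a facility-location instance with a finite set F of facilities, a finite nonempty set C of n customers, costs cost : F → ℝ≥0, and distances dist : F × C → ℝ≥0. Let 0 < ε < 1 and let k, d ≥ 0 be such that there exists a fractional solution x* with facility cost cost(x*) ≤ k and assignment cost dist(x*) ≤ d. Let N ≥ ln(n)/chern(−ε) be such that (1−ε)·N is a positive integer. Then there exist nonnegative reals x̂(f) and x̂(f,c), each an integer multiple of 1/((1−ε)·N), satisfying x̂(f,c) ≤ x̂(f) for all f, c and Σ_f x̂(f,c) ≥ 1 for every customer c, with Σ_f x̂(f)·cost(f) + Σ_{f,c} x̂(f,c)·dist(f,c) ≤ (1−ε)^{-1}·(d + k). -/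
/-!
Young's Chernoff–Wald rounding. Repeatedly draw a facility `f` with probability `x f / X`, where
`X = ∑ f, x f ≥ 1`, and assign it each customer `c` independently with probability `xa f c / x f`;
stop once every customer has been assigned `z = (1 - ε) N` times. A draw costs at most `K / X` in
expectation (`K = d + k`) and hits each customer with probability `1 / X`, so by Wald's identity
the expected total cost is at most `K / X · E[T]` for the stopping time `T`. For
`ρ = (1 - ε / X)⁻¹`, the quantity `ρ ^ t (1 - ε)⁻¹ ^ (hits still needed by c)` does not grow in
expectation, so a union bound gives `E[ρ ^ T] ≤ n (1 - ε)⁻¹ ^ z`, and Jensen's inequality gives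
`E[T] ≤ log (n (1 - ε)⁻¹ ^ z) / log ρ < X N` by the choice of `N`. The method of conditional
expectations, applied to the process truncated at a large horizon, yields one run that does as
well; its counts divided by `z` form the required solution.
-/

open Finset

theorem chern_pos {ε : ℝ} (h1 : -1 < ε) (h0 : ε ≠ 0) : 0 < chern ε := by
  have hpos : 0 < 1 + ε := by linarith
  have hlog := Real.log_lt_sub_one_of_pos (inv_pos.2 hpos) (by simpa [inv_eq_one] using h0)
  rw [Real.log_inv] at hlog
  have : (1 + ε) * (1 + ε)⁻¹ = 1 := mul_inv_cancel₀ hpos.ne'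
  unfold chern
  nlinarith [mul_lt_mul_of_pos_left hlog hpos]

theorem log_add_mul_log_inv_le_of_le_mul_chern {n ε N : ℝ} {z : ℕ} (hzN : (1 - ε) * N = z)
    (hN : Real.log n ≤ N * chern (-ε)) : Real.log n + z * Real.log (1 - ε)⁻¹ ≤ ε * N := by
  have : N * chern (-ε) = z * Real.log (1 - ε) + ε * N := by
    rw [chern, ← hzN, ← sub_eq_add_neg]; ring
  rw [Real.log_inv]
  linarith

theorem lt_neg_log_one_sub {t : ℝ} (h0 : 0 < t) (h1 : t < 1) : t < -Real.log (1 - t) := by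
  linarith [Real.log_lt_sub_one_of_pos (sub_pos.2 h1) (by linarith)]

section WeightedAverage

variable {ι : Type*} [Fintype ι] {p : ι → ℝ} (hp : ∀ i, 0 ≤ p i) (hp1 : ∑ i, p i = 1)
include hp hp1

theorem exists_pos_le_sum_mul (v : ι → ℝ) : ∃ i, 0 < p i ∧ v i ≤ ∑ j, p j * v j := by
  have hsupp : ∑ i with 0 < p i, p i = 1 := by
    rw [sum_filter_of_ne fun i _ h => (hp i).lt_of_ne' h, hp1]
  have hne : (univ.filter fun i => 0 < p i).Nonempty :=
    nonempty_of_sum_ne_zero (f := p) (by rw [hsupp]; norm_num)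
  obtain ⟨i, hi, hle⟩ := exists_le_of_sum_le hne (f := fun i => p i * v i)
    (g := fun i => p i * ∑ j, p j * v j) <| by
      rw [← sum_mul, hsupp, one_mul, sum_filter_of_ne]
      exact fun i _ h => (hp i).lt_of_ne' (left_ne_zero_of_mul h)
  have hi := (mem_filter.1 hi).2
  exact ⟨i, hi, le_of_mul_le_mul_left hle hi⟩

theorem one_le_sum_mul {v : ι → ℝ} (hv : ∀ i, 1 ≤ v i) : 1 ≤ ∑ i, p i * v i :=
  hp1.symm.le.trans (sum_le_sum fun i _ => le_mul_of_one_le_right (hp i) (hv i))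

end WeightedAverage

section Bernoulli

variable {ι : Type*} [Fintype ι] [DecidableEq ι]

def bernoulliWeight (r : ι → ℝ) (A : Finset ι) : ℝ :=
  (∏ i ∈ A, r i) * ∏ i ∈ univ \ A, (1 - r i)

theorem bernoulliWeight_nonneg {r : ι → ℝ} (h0 : ∀ i, 0 ≤ r i) (h1 : ∀ i, r i ≤ 1)
    (A : Finset ι) : 0 ≤ bernoulliWeight r A :=
  mul_nonneg (prod_nonneg fun i _ => h0 i) (prod_nonneg fun i _ => sub_nonneg.2 (h1 i))

theorem sum_bernoulliWeight (r : ι → ℝ) : ∑ A, bernoulliWeight r A = 1 := by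
  simp [bernoulliWeight, ← powerset_univ, ← prod_add]

theorem sum_bernoulliWeight_of_mem (r : ι → ℝ) (i : ι) :
    ∑ A with i ∈ A, bernoulliWeight r A = r i := by
  -- zeroing the factor `1 - r i` kills exactly the sets avoiding `i`
  let g := Function.update (fun j => 1 - r j) i 0
  have hterm : ∀ A : Finset ι, (∏ j ∈ A, r j) * ∏ j ∈ univ \ A, g j
      = if i ∈ A then bernoulliWeight r A else 0 := by
    intro A
    split_ifs with hi
    · refine congrArg _ (prod_congr rfl fun j hj => ?_)
      have : j ≠ i := by rintro rfl; simp [hi] at hj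
      simp [g, this]
    · exact mul_eq_zero_of_right _ (prod_eq_zero (i := i) (by simp [hi]) (by simp [g]))
  have hprod : ∏ j, (r j + g j) = ∏ j, Function.update (fun _ => (1 : ℝ)) i (r i) j :=
    prod_congr rfl fun j _ => by
      by_cases hj : j = i
      · subst hj; simp [g]
      · simp [g, hj]
  rw [sum_filter, ← sum_congr rfl fun A _ => hterm A, ← powerset_univ, ← prod_add, hprod,
    prod_update_of_mem (mem_univ i)]
  simp

theorem sum_bernoulliWeight_mul_sum (r d : ι → ℝ) :
    ∑ A, bernoulliWeight r A * ∑ i ∈ A, d i = ∑ i, r i * d i := by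
  calc ∑ A, bernoulliWeight r A * ∑ i ∈ A, d i
      = ∑ A, ∑ i, (if i ∈ A then bernoulliWeight r A else 0) * d i := by
        simp [mul_sum, ite_mul, sum_ite_mem]
    _ = ∑ i, r i * d i := by
        rw [sum_comm]
        simp_rw [← sum_mul, ← sum_filter, sum_bernoulliWeight_of_mem]

end Bernoulli

section HaltingChain

variable {Ω σ : Type*} [Fintype Ω] (p : Ω → ℝ) (next : σ → Ω → σ) (halted : σ → Prop)
  [DecidablePred halted]

/-- `E[ρ ^ min T m]`, where `T` is the halting time of the chain started at `S`. -/
noncomputable def stopMoment (ρ : ℝ) : ℕ → σ → ℝ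
  | 0, _ => 1
  | m + 1, S => if halted S then 1 else ρ * ∑ ω, p ω * stopMoment ρ m (next S ω)

/-- The expected cost paid before time `min T m`, plus a penalty `B` if the chain has not halted
by time `m`. -/
noncomputable def truncatedCost (γ : Ω → ℝ) (B : ℝ) : ℕ → σ → ℝ
  | 0, S => if halted S then 0 else B
  | m + 1, S => if halted S then 0 else ∑ ω, p ω * (γ ω + truncatedCost γ B m (next S ω))

variable {p next halted}

theorem stopMoment_of_halted {ρ : ℝ} {S : σ} (h : halted S) (m : ℕ) :
    stopMoment p next halted ρ m S = 1 := by
  cases m <;> simp [stopMoment, h]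

theorem truncatedCost_of_halted {γ : Ω → ℝ} {B : ℝ} {S : σ} (h : halted S) (m : ℕ) :
    truncatedCost p next halted γ B m S = 0 := by
  cases m <;> simp [truncatedCost, h]

variable (hp : ∀ ω, 0 ≤ p ω) (hp1 : ∑ ω, p ω = 1)
include hp hp1

theorem one_le_stopMoment {ρ : ℝ} (hρ : 1 ≤ ρ) (m : ℕ) (S : σ) :
    1 ≤ stopMoment p next halted ρ m S := by
  induction m generalizing S with
  | zero => rfl
  | succ m ih =>
    rw [stopMoment]
    split_ifs
    · rfl
    · exact one_le_mul_of_one_le_of_one_le hρ (one_le_sum_mul hp hp1 fun ω => ih _)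

/-- Wald's identity combined with Jensen's inequality for `log`: the expected number of steps is
at most `log E[ρ ^ T] / log ρ`. -/
theorem truncatedCost_le {ρ β B : ℝ} {γ : Ω → ℝ} (hρ : 1 ≤ ρ) (hβ : 0 ≤ β) (hB : 0 ≤ B)
    (hγ : ∑ ω, p ω * γ ω ≤ β * Real.log ρ) (m : ℕ) (S : σ) :
    truncatedCost p next halted γ B m S ≤
      β * Real.log (stopMoment p next halted ρ m S)
        + B * ρ⁻¹ ^ m * stopMoment p next halted ρ m S := by
  have hρ0 : 0 < ρ := by linarith
  induction m generalizing S with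
  | zero => by_cases h : halted S <;> simp [truncatedCost, stopMoment, h, hB]
  | succ m ih =>
    by_cases h : halted S
    · rw [truncatedCost_of_halted h, stopMoment_of_halted h, Real.log_one]
      positivity
    set G := fun ω => stopMoment p next halted ρ m (next S ω)
    have hG : ∀ ω, 1 ≤ G ω := fun ω => one_le_stopMoment hp hp1 hρ m _
    have hT : 0 < ∑ ω, p ω * G ω := one_pos.trans_le (one_le_sum_mul hp hp1 hG)
    have hjensen : ∑ ω, p ω * Real.log (G ω) ≤ Real.log (∑ ω, p ω * G ω) :=
      strictConcaveOn_log_Ioi.concaveOn.le_map_sum (fun ω _ => hp ω) hp1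
        fun ω _ => one_pos.trans_le (hG ω)
    simp only [truncatedCost, stopMoment, h, if_false]
    calc ∑ ω, p ω * (γ ω + truncatedCost p next halted γ B m (next S ω))
        ≤ ∑ ω, p ω * γ ω + ∑ ω, p ω * (β * Real.log (G ω) + B * ρ⁻¹ ^ m * G ω) := by
          rw [← sum_add_distrib]
          refine sum_le_sum fun ω _ => ?_
          rw [← mul_add]
          exact mul_le_mul_of_nonneg_left (add_le_add_right (ih _) _) (hp ω)
      _ ≤ β * Real.log ρ
            + (β * Real.log (∑ ω, p ω * G ω) + B * ρ⁻¹ ^ m * ∑ ω, p ω * G ω) := by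
          gcongr
          simp_rw [mul_add, sum_add_distrib, mul_left_comm (p _), ← mul_sum]
          gcongr
      _ = _ := by
          rw [Real.log_mul hρ0.ne' hT.ne', pow_succ]
          field_simp
          ring

/-- Method of conditional expectations. -/
theorem exists_run_le_truncatedCost (γ : Ω → ℝ) (B : ℝ) (m : ℕ) (S : σ) :
    ∃ l : List Ω, (∀ ω ∈ l, 0 < p ω) ∧
      (l.map γ).sum + (if halted (l.foldl next S) then 0 else B)
        ≤ truncatedCost p next halted γ B m S := by
  induction m generalizing S with
  | zero =>
    refine ⟨[], by simp, ?_⟩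
    simp only [truncatedCost, List.map_nil, List.sum_nil, zero_add]
    rfl
  | succ m ih =>
    by_cases h : halted S
    · exact ⟨[], by simp, by simp [truncatedCost_of_halted h, h]⟩
    obtain ⟨ω, hω, hle⟩ := exists_pos_le_sum_mul hp hp1
      fun ω => γ ω + truncatedCost p next halted γ B m (next S ω)
    obtain ⟨l, hl, hlS⟩ := ih (next S ω)
    refine ⟨ω :: l, by simpa [hω] using hl, ?_⟩
    simp only [truncatedCost, h, if_false, List.map_cons, List.sum_cons, List.foldl_cons,
      add_assoc]
    exact (add_le_add_right hlS _).trans hle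

theorem exists_halting_run {ρ β T Γ : ℝ} {γ : Ω → ℝ} {S : σ} (hρ : 1 < ρ) (hβ : 0 ≤ β)
    (hγ0 : ∀ ω, 0 ≤ γ ω) (hγ : ∑ ω, p ω * γ ω ≤ β * Real.log ρ)
    (hΓ : ∀ m, stopMoment p next halted ρ m S ≤ Γ) (hT : β * Real.log Γ < T) :
    ∃ l : List Ω, (∀ ω ∈ l, 0 < p ω) ∧ halted (l.foldl next S) ∧ (l.map γ).sum < T := by
  have hΓ1 : 1 ≤ Γ := (one_le_stopMoment hp hp1 hρ.le 0 S).trans (hΓ 0)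
  have hT0 : 0 < T := (mul_nonneg hβ (Real.log_nonneg hΓ1)).trans_lt hT
  -- a horizon `m` at which the penalty term has become negligible
  obtain ⟨m, hm⟩ := exists_pow_lt_of_lt_one (div_pos (sub_pos.2 hT) (mul_pos hT0 (by linarith)))
    (inv_lt_one_of_one_lt₀ hρ)
  rw [lt_div_iff₀ (by positivity), ← mul_assoc, mul_comm _ T] at hm
  have hlt : truncatedCost p next halted γ T m S < T := calc
    _ ≤ β * Real.log (stopMoment p next halted ρ m S)
          + T * ρ⁻¹ ^ m * stopMoment p next halted ρ m S :=
        truncatedCost_le hp hp1 hρ.le hβ hT0.le hγ m S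
    _ ≤ β * Real.log Γ + T * ρ⁻¹ ^ m * Γ := by
        have hG1 := one_le_stopMoment (next := next) (halted := halted) hp hp1 hρ.le m S
        exact add_le_add
          (mul_le_mul_of_nonneg_left (Real.log_le_log (one_pos.trans_le hG1) (hΓ m)) hβ)
          (mul_le_mul_of_nonneg_left (hΓ m) (by positivity))
    _ < T := by linarith
  obtain ⟨l, hlp, hl⟩ :=
    exists_run_le_truncatedCost (next := next) (halted := halted) hp hp1 γ T m S
  have hcost : 0 ≤ (l.map γ).sum := List.sum_nonneg (by simpa using fun ω _ => hγ0 ω)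
  refine ⟨l, hlp, ?_, ?_⟩
  · by_contra h
    rw [if_neg h] at hl
    linarith
  · split_ifs at hl <;> linarith

/-- When the expected cost vanishes, every outcome of positive probability is free. -/
theorem exists_halting_run_of_sum_nonpos {ρ Γ : ℝ} {γ : Ω → ℝ} {S : σ} (hρ : 1 < ρ)
    (hγ0 : ∀ ω, 0 ≤ γ ω) (hγ : ∑ ω, p ω * γ ω ≤ 0)
    (hΓ : ∀ m, stopMoment p next halted ρ m S ≤ Γ) :
    ∃ l : List Ω, halted (l.foldl next S) ∧ (l.map γ).sum = 0 := by
  obtain ⟨l, hlp, hhalt, -⟩ := exists_halting_run hp hp1 hρ le_rfl hγ0 (by simpa using hγ) hΓ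
    (T := 1) (by simp)
  have hzero : ∀ ω, p ω * γ ω = 0 := fun ω =>
    (sum_eq_zero_iff_of_nonneg fun ω _ => mul_nonneg (hp ω) (hγ0 ω)).1
      (hγ.antisymm (sum_nonneg fun ω _ => mul_nonneg (hp ω) (hγ0 ω))) ω (mem_univ ω)
  refine ⟨l, hhalt, List.sum_eq_zero fun a ha => ?_⟩
  obtain ⟨ω, hω, rfl⟩ := List.mem_map.1 ha
  exact (mul_eq_zero.1 (hzero ω)).resolve_left (hlp ω hω).ne'

end HaltingChain

section Coverage

variable {Ω C : Type*} [DecidableEq C] (A : Ω → Finset C)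

def addHits (S : C → ℕ) (ω : Ω) : C → ℕ := fun c => S c + if c ∈ A ω then 1 else 0

theorem foldl_addHits_apply (S : C → ℕ) (l : List Ω) (c : C) :
    l.foldl (addHits A) S c = S c + l.countP (fun ω => c ∈ A ω) := by
  induction l generalizing S with
  | nil => simp
  | cons ω l ih =>
    simp only [List.foldl_cons, ih, addHits, List.countP_cons, decide_eq_true_eq]
    ring

variable [Fintype Ω] [Fintype C] {p : Ω → ℝ} (hp : ∀ ω, 0 ≤ p ω) (hp1 : ∑ ω, p ω = 1)
include hp hp1

/-- Union bound over customers: `hρ` says that a step preserves `ρ` times the expectation of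
`(1 - ε)⁻¹ ^ (hits still needed by c)`. -/
theorem stopMoment_addHits_le {π ε ρ : ℝ} {z : ℕ}
    (hπ : ∀ c, ∑ ω, p ω * (if c ∈ A ω then 1 else 0) = π) (hε0 : 0 ≤ ε) (hε1 : ε < 1)
    (hρ0 : 0 ≤ ρ) (hρ : ρ * (1 - π * ε) = 1) (m : ℕ) (S : C → ℕ) (hS : ¬ ∀ c, z ≤ S c) :
    stopMoment p (addHits A) (fun S => ∀ c, z ≤ S c) ρ m S
      ≤ ∑ c with S c < z, (1 - ε)⁻¹ ^ (z - S c) := by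
  set μ := (1 - ε)⁻¹
  have hμ : μ * (1 - ε) = 1 := inv_mul_cancel₀ (by linarith)
  have hμ1 : 1 ≤ μ := one_le_inv₀ (by linarith) |>.2 (by linarith)
  have hone : ∀ S T : C → ℕ, (¬ ∀ c, z ≤ S c) → 1 ≤ ∑ c with S c < z, μ ^ (z - T c) := by
    intro S T hS
    push Not at hS
    obtain ⟨c, hc⟩ := hS
    exact (one_le_pow₀ hμ1).trans <| single_le_sum (f := fun c => μ ^ (z - T c))
      (fun c _ => pow_nonneg (by linarith) _) (by simpa using hc)
  have hcust : ∀ S : C → ℕ, ∀ c, S c < z →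
      ρ * ∑ ω, p ω * μ ^ (z - addHits A S ω c) = μ ^ (z - S c) := by
    intro S c hc
    have hstep : ∀ ω, μ ^ (z - addHits A S ω c)
        = μ ^ (z - S c) * (1 - ε * (if c ∈ A ω then 1 else 0)) := by
      intro ω
      by_cases hω : c ∈ A ω
      · obtain ⟨k, hk⟩ : ∃ k, z - S c = k + 1 := ⟨z - S c - 1, by omega⟩
        simp only [addHits, hω, if_true, mul_one]
        rw [show z - (S c + 1) = k by omega, hk, pow_succ, mul_assoc, hμ]
        ring
      · simp [addHits, hω]
    have hsum : ∑ ω, p ω * μ ^ (z - addHits A S ω c) = μ ^ (z - S c) * (1 - π * ε) := by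
      simp_rw [hstep, mul_left_comm (p _), ← mul_sum, mul_sub, mul_one, sum_sub_distrib, hp1,
        mul_left_comm (p _) ε, ← mul_sum, hπ]
      ring
    rw [hsum]
    linear_combination μ ^ (z - S c) * hρ
  induction m generalizing S with
  | zero => exact hone S S hS
  | succ m ih =>
    have hnext : ∀ ω, stopMoment p (addHits A) (fun S => ∀ c, z ≤ S c) ρ m (addHits A S ω)
        ≤ ∑ c with S c < z, μ ^ (z - addHits A S ω c) := by
      intro ω
      by_cases h : ∀ c, z ≤ addHits A S ω c
      · exact (stopMoment_of_halted h m).trans_le (hone S _ hS)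
      refine (ih _ h).trans (sum_le_sum_of_subset_of_nonneg ?_ fun _ _ _ => by positivity)
      intro c hc
      simp only [mem_filter, mem_univ, true_and] at hc ⊢
      exact (Nat.le_add_right _ _).trans_lt hc
    simp only [stopMoment, hS, if_false]
    calc ρ * ∑ ω, p ω * stopMoment p (addHits A) (fun S => ∀ c, z ≤ S c) ρ m (addHits A S ω)
        ≤ ρ * ∑ ω, p ω * ∑ c with S c < z, μ ^ (z - addHits A S ω c) := by
          gcongr with ω
          exacts [hp ω, hnext ω]
      _ = ∑ c with S c < z, ρ * ∑ ω, p ω * μ ^ (z - addHits A S ω c) := by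
          simp_rw [mul_sum]
          rw [sum_comm]
      _ = _ := sum_congr rfl fun c hc => hcust S c (mem_filter.1 hc).2

end Coverage

theorem List.sum_countP_eq_and {α β : Type*} [Fintype β] [DecidableEq β] (g : α → β)
    (P : α → Prop) [DecidablePred P] (l : List α) :
    ∑ b, l.countP (fun a => g a = b ∧ P a) = l.countP P := by
  induction l with
  | nil => simp
  | cons a l ih =>
    simp only [List.countP_cons, sum_add_distrib, ih]
    by_cases hP : P a <;> simp [hP]

section FacilityLocation

variable {F C : Type*} [Fintype F]

structure IsFractionalCover (x : F → ℝ) (xa : F → C → ℝ) : Prop where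
  nonneg : ∀ f, 0 ≤ x f
  assign_nonneg : ∀ f c, 0 ≤ xa f c
  assign_le : ∀ f c, xa f c ≤ x f
  sum_assign : ∀ c, ∑ f, xa f c = 1

/-- Open `f` with probability `x f / ∑ x`, then assign each customer `c` to it independently with
probability `xa f c / x f`. -/
noncomputable def roundingWeight [Fintype C] [DecidableEq C] (x : F → ℝ) (xa : F → C → ℝ)
    (ω : F × Finset C) : ℝ :=
  x ω.1 / (∑ f, x f) * bernoulliWeight (fun c => xa ω.1 c / x ω.1) ω.2

def serviceCost (cost : F → ℝ) (dist : F → C → ℝ) (ω : F × Finset C) : ℝ :=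
  cost ω.1 + ∑ c ∈ ω.2, dist ω.1 c

theorem sum_map_serviceCost [Fintype C] [DecidableEq F] [DecidableEq C] (cost : F → ℝ)
    (dist : F → C → ℝ) (l : List (F × Finset C)) :
    (l.map (serviceCost cost dist)).sum
      = ∑ f, (l.countP (·.1 = f) : ℝ) * cost f
        + ∑ f, ∑ c, (l.countP (fun ω => ω.1 = f ∧ c ∈ ω.2) : ℝ) * dist f c := by
  induction l with
  | nil => simp
  | cons ω l ih =>
    simp only [List.map_cons, List.sum_cons, ih, List.countP_cons]
    push_cast
    simp only [add_mul, sum_add_distrib, serviceCost, decide_eq_true_eq, ite_mul, one_mul, zero_mul, sum_ite_eq, mem_univ,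
      if_true, ite_and, sum_ite_irrel, sum_ite_mem, univ_inter, sum_const_zero]
    ring

namespace IsFractionalCover

variable {x : F → ℝ} {xa : F → C → ℝ} (h : IsFractionalCover x xa)
include h

theorem one_le_sum [Nonempty C] : 1 ≤ ∑ f, x f := by
  obtain ⟨c⟩ := ‹Nonempty C›
  exact (h.sum_assign c).symm.le.trans (sum_le_sum fun f _ => h.assign_le f c)

theorem cost_nonneg [Fintype C] {cost : F → ℝ} {dist : F → C → ℝ} (hcost : ∀ f, 0 ≤ cost f)
    (hdist : ∀ f c, 0 ≤ dist f c) :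
    0 ≤ ∑ f, x f * cost f + ∑ f, ∑ c, xa f c * dist f c :=
  add_nonneg (sum_nonneg fun f _ => mul_nonneg (h.nonneg f) (hcost f))
    (sum_nonneg fun f _ => sum_nonneg fun c _ => mul_nonneg (h.assign_nonneg f c) (hdist f c))

theorem mul_div_eq (f : F) (c : C) : x f * (xa f c / x f) = xa f c := by
  rw [← mul_div_assoc, mul_div_cancel_left_of_imp]
  exact fun hx => le_antisymm (hx ▸ h.assign_le f c) (h.assign_nonneg f c)

variable [Fintype C] [DecidableEq C]

theorem roundingWeight_nonneg (ω : F × Finset C) : 0 ≤ roundingWeight x xa ω :=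
  mul_nonneg (div_nonneg (h.nonneg _) (sum_nonneg fun f _ => h.nonneg f))
    (bernoulliWeight_nonneg (fun c => div_nonneg (h.assign_nonneg _ c) (h.nonneg _))
      (fun c => div_le_one_of_le₀ (h.assign_le _ c) (h.nonneg _)) _)

theorem sum_roundingWeight [Nonempty C] : ∑ ω, roundingWeight x xa ω = 1 := by
  simp_rw [Fintype.sum_prod_type, roundingWeight, ← mul_sum, sum_bernoulliWeight, mul_one,
    ← sum_div]
  exact div_self (one_pos.trans_le h.one_le_sum).ne'

theorem sum_roundingWeight_mul_mem (c : C) :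
    ∑ ω, roundingWeight x xa ω * (if c ∈ ω.2 then 1 else 0) = (∑ f, x f)⁻¹ := by
  simp_rw [Fintype.sum_prod_type, roundingWeight, mul_assoc, ← mul_sum, mul_ite, mul_one,
    mul_zero, ← sum_filter, sum_bernoulliWeight_of_mem, div_mul_eq_mul_div, h.mul_div_eq,
    ← sum_div, h.sum_assign, one_div]

theorem sum_roundingWeight_mul_serviceCost (cost : F → ℝ) (dist : F → C → ℝ) :
    ∑ ω, roundingWeight x xa ω * serviceCost cost dist ω
      = (∑ f, x f * cost f + ∑ f, ∑ c, xa f c * dist f c) / ∑ f, x f := by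
  simp_rw [Fintype.sum_prod_type, roundingWeight, serviceCost, mul_assoc, ← mul_sum, mul_add,
    sum_add_distrib, ← sum_mul, sum_bernoulliWeight, sum_bernoulliWeight_mul_sum, one_mul]
  have hterm : ∀ f c, x f / (∑ f, x f) * (xa f c / x f * dist f c)
      = xa f c * dist f c / ∑ f, x f := fun f c => by
    rw [← mul_div_right_comm, ← mul_assoc, h.mul_div_eq]
  rw [add_div, sum_div, sum_div, ← sum_add_distrib]
  refine sum_congr rfl fun f _ => ?_
  rw [mul_add, mul_sum, sum_div, div_mul_eq_mul_div]
  simp_rw [hterm]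

theorem stopMoment_roundingWeight_le [Nonempty C] {ε ρ : ℝ} {z : ℕ} (hε0 : 0 ≤ ε) (hε1 : ε < 1)
    (hz : 0 < z) (hρ0 : 0 ≤ ρ) (hρ : ρ * (1 - (∑ f, x f)⁻¹ * ε) = 1) (m : ℕ) :
    stopMoment (roundingWeight x xa) (addHits Prod.snd) (fun S => ∀ c, z ≤ S c) ρ m 0
      ≤ Fintype.card C * (1 - ε)⁻¹ ^ z := by
  refine (stopMoment_addHits_le Prod.snd h.roundingWeight_nonneg h.sum_roundingWeight
    h.sum_roundingWeight_mul_mem hε0 hε1 hρ0 hρ m 0 (by simpa using hz.ne')).trans_eq ?_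
  simp [hz]

theorem exists_covering_run [Nonempty C] {cost : F → ℝ} {dist : F → C → ℝ}
    (hcost : ∀ f, 0 ≤ cost f) (hdist : ∀ f c, 0 ≤ dist f c) {K ε N : ℝ} {z : ℕ}
    (hK : ∑ f, x f * cost f + ∑ f, ∑ c, xa f c * dist f c ≤ K) (hε0 : 0 < ε) (hε1 : ε < 1)
    (hz : 0 < z) (hzN : (1 - ε) * N = z) (hN : Real.log (Fintype.card C) ≤ N * chern (-ε)) :
    ∃ l : List (F × Finset C), (∀ c, z ≤ l.countP (fun ω => c ∈ ω.2)) ∧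
      (l.map (serviceCost cost dist)).sum ≤ N * K := by
  set X := ∑ f, x f
  have hX : 1 ≤ X := h.one_le_sum
  have hp := h.roundingWeight_nonneg
  have hp1 := h.sum_roundingWeight
  have hγ0 : ∀ ω, 0 ≤ serviceCost cost dist ω :=
    fun ω => add_nonneg (hcost _) (sum_nonneg fun c _ => hdist _ c)
  have hγ : ∑ ω, roundingWeight x xa ω * serviceCost cost dist ω ≤ K / X := by
    rw [h.sum_roundingWeight_mul_serviceCost]
    exact div_le_div_of_nonneg_right hK (by linarith)
  have hK0 : 0 ≤ K := (h.cost_nonneg hcost hdist).trans hK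
  have ht0 : 0 < X⁻¹ * ε := by positivity
  have ht1 : X⁻¹ * ε < 1 :=
    mul_lt_one_of_nonneg_of_lt_one_right (inv_le_one_of_one_le₀ hX) hε0.le hε1
  set ρ := (1 - X⁻¹ * ε)⁻¹
  have hρ1 : 1 < ρ := (one_lt_inv₀ (by linarith)).2 (by linarith)
  have hlogρ : X⁻¹ * ε < Real.log ρ := by
    rw [Real.log_inv]
    exact lt_neg_log_one_sub ht0 ht1
  set Γ := (Fintype.card C : ℝ) * (1 - ε)⁻¹ ^ z
  have hΓ := h.stopMoment_roundingWeight_le hε0.le hε1 hz (by positivity)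
    (inv_mul_cancel₀ (by linarith))
  have hlogΓ : Real.log Γ ≤ ε * N := by
    rw [Real.log_mul (by positivity) (by positivity), Real.log_pow]
    exact log_add_mul_log_inv_le_of_le_mul_chern hzN hN
  rcases hK0.eq_or_lt with rfl | hKpos
  · obtain ⟨l, hhalt, hl⟩ := exists_halting_run_of_sum_nonpos hp hp1 hρ1 hγ0
      (by simpa using hγ) hΓ
    exact ⟨l, fun c => by simpa [foldl_addHits_apply] using hhalt c, by simp [hl]⟩
  · set β := K / (X * Real.log ρ) with hβ
    have hlogρ0 : 0 < Real.log ρ := ht0.trans hlogρ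
    have hβγ : ∑ ω, roundingWeight x xa ω * serviceCost cost dist ω ≤ β * Real.log ρ := by
      convert hγ using 1
      rw [hβ]
      field_simp
    have hN0 : 0 < N := pos_of_mul_pos_right (hzN ▸ Nat.cast_pos.2 hz) (by linarith)
    have hT : β * Real.log Γ < N * K := calc
      β * Real.log Γ ≤ β * (ε * N) := mul_le_mul_of_nonneg_left hlogΓ (by positivity)
      _ = N * K * (X⁻¹ * ε / Real.log ρ) := by rw [hβ]; field_simp
      _ < N * K := mul_lt_of_lt_one_right (by positivity) ((div_lt_one hlogρ0).2 hlogρ)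
    obtain ⟨l, -, hhalt, hl⟩ := exists_halting_run hp hp1 hρ1 (by positivity) hγ0 hβγ hΓ hT
    exact ⟨l, fun c => by simpa [foldl_addHits_apply] using hhalt c, hl.le⟩

theorem exists_nat_cover [Nonempty C] [DecidableEq F] {cost : F → ℝ} {dist : F → C → ℝ}
    (hcost : ∀ f, 0 ≤ cost f) (hdist : ∀ f c, 0 ≤ dist f c) {K ε N : ℝ} {z : ℕ}
    (hK : ∑ f, x f * cost f + ∑ f, ∑ c, xa f c * dist f c ≤ K) (hε0 : 0 < ε) (hε1 : ε < 1)
    (hz : 0 < z) (hzN : (1 - ε) * N = z) (hN : Real.log (Fintype.card C) ≤ N * chern (-ε)) :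
    ∃ (a : F → ℕ) (b : F → C → ℕ), (∀ f c, b f c ≤ a f) ∧ (∀ c, z ≤ ∑ f, b f c) ∧
      ∑ f, (a f : ℝ) * cost f + ∑ f, ∑ c, (b f c : ℝ) * dist f c ≤ N * K := by
  obtain ⟨l, hcov, hl⟩ := h.exists_covering_run hcost hdist hK hε0 hε1 hz hzN hN
  refine ⟨fun f => l.countP (·.1 = f), fun f c => l.countP (fun ω => ω.1 = f ∧ c ∈ ω.2),
    fun f c => List.countP_mono_left (by simp_all), fun c => ?_, ?_⟩
  · rw [List.sum_countP_eq_and]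
    exact hcov c
  · rwa [← sum_map_serviceCost]

end IsFractionalCover

end FacilityLocation

theorem fractional_facility_location_guarantee_general
    {F C : Type*} [Fintype F] [Fintype C] [Nonempty C]
    (cost : F → ℝ) (hcost : ∀ f, 0 ≤ cost f)
    (dist : F → C → ℝ) (hdist : ∀ f c, 0 ≤ dist f c)
    (ε : ℝ) (hε0 : 0 < ε) (hε1 : ε < 1)
    (k d : ℝ)
    (hfrac : ∃ (x : F → ℝ) (xa : F → C → ℝ),
      (∀ f, x f ∈ Set.Icc (0 : ℝ) 1) ∧
      (∀ f c, 0 ≤ xa f c) ∧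
      (∀ f c, xa f c ≤ x f) ∧
      (∀ c, ∑ f, xa f c = 1) ∧
      (∑ f, x f * cost f ≤ k) ∧
      (∑ f, ∑ c, xa f c * dist f c ≤ d))
    (N : ℝ)
    (hN : Real.log (Fintype.card C : ℝ) / chern (-ε) ≤ N)
    (hNint : ∃ z : ℕ, 0 < z ∧ (1 - ε) * N = (z : ℝ)) :
    ∃ (xh : F → ℝ) (xha : F → C → ℝ),
      (∀ f, 0 ≤ xh f ∧ ∃ z : ℤ, xh f = (z : ℝ) / ((1 - ε) * N)) ∧
      (∀ f c, 0 ≤ xha f c ∧ ∃ z : ℤ, xha f c = (z : ℝ) / ((1 - ε) * N)) ∧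
      (∀ f c, xha f c ≤ xh f) ∧
      (∀ c, 1 ≤ ∑ f, xha f c) ∧
      ((∑ f, xh f * cost f) + ∑ f, ∑ c, xha f c * dist f c
        ≤ (1 - ε)⁻¹ * (d + k)) := by
  classical
  obtain ⟨x, xa, hx, hxa0, hxax, hxa1, hk, hd⟩ := hfrac
  obtain ⟨z, hz, hzN⟩ := hNint
  have hcover : IsFractionalCover x xa := ⟨fun f => (hx f).1, hxa0, hxax, hxa1⟩
  obtain ⟨a, b, hba, hbz, hab⟩ := hcover.exists_nat_cover hcost hdist (K := d + k) (by linarith)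
    hε0 hε1 hz hzN ((div_le_iff₀ (chern_pos (by linarith) (by linarith))).1 hN)
  have hz0 : (0 : ℝ) < (1 - ε) * N := hzN ▸ Nat.cast_pos.2 hz
  refine ⟨fun f => a f / ((1 - ε) * N), fun f c => b f c / ((1 - ε) * N),
    fun f => ⟨by positivity, a f, by simp⟩, fun f c => ⟨by positivity, b f c, by simp⟩,
    fun f c => div_le_div_of_nonneg_right (by exact_mod_cast hba f c) hz0.le, fun c => ?_, ?_⟩
  · rw [← sum_div, le_div_iff₀ hz0, one_mul, hzN]
    exact_mod_cast hbz c
  · simp_rw [div_mul_eq_mul_div, ← sum_div, ← add_div, div_le_iff₀ hz0]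
    calc _ ≤ N * (d + k) := hab
      _ = _ := by field_simp [(sub_pos.2 hε1).ne']

/-- **Fractional facility-location guarantee (existence form).**
For a facility-location instance with `n ≥ 1` customers admitting a fractional
solution of facility cost at most `k` and assignment cost at most `d`, and any
`N ≥ ln(n)/chern(−ε)` with `(1−ε)·N` a positive integer, there is a fractional
cover `(xh, xha)` whose values are integer multiples of `1/((1−ε)·N)`, with
facility cost plus assignment cost at most `(1−ε)⁻¹·(d + k)`. -/
theorem fractional_facility_location_guarantee
    {F C : Type*} [Fintype F] [Fintype C] [Nonempty C]
    (cost : F → ℝ) (hcost : ∀ f, 0 ≤ cost f)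
    (dist : F → C → ℝ) (hdist : ∀ f c, 0 ≤ dist f c)
    (ε : ℝ) (hε0 : 0 < ε) (hε1 : ε < 1)
    (k d : ℝ) (hk : 0 ≤ k) (hd : 0 ≤ d)
    (hfrac : ∃ (x : F → ℝ) (xa : F → C → ℝ),
      (∀ f, x f ∈ Set.Icc (0 : ℝ) 1) ∧
      (∀ f c, 0 ≤ xa f c) ∧
      (∀ f c, xa f c ≤ x f) ∧
      (∀ c, ∑ f, xa f c = 1) ∧
      (∑ f, x f * cost f ≤ k) ∧
      (∑ f, ∑ c, xa f c * dist f c ≤ d))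
    (N : ℝ)
    (hN : Real.log (Fintype.card C : ℝ) / chern (-ε) ≤ N)
    (hNint : ∃ z : ℕ, 0 < z ∧ (1 - ε) * N = (z : ℝ)) :
    ∃ (xh : F → ℝ) (xha : F → C → ℝ),
      (∀ f, 0 ≤ xh f ∧ ∃ z : ℤ, xh f = (z : ℝ) / ((1 - ε) * N)) ∧
      (∀ f c, 0 ≤ xha f c ∧ ∃ z : ℤ, xha f c = (z : ℝ) / ((1 - ε) * N)) ∧
      (∀ f c, xha f c ≤ xh f) ∧
      (∀ c, 1 ≤ ∑ f, xha f c) ∧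
      ((∑ f, xh f * cost f) + ∑ f, ∑ c, xha f c * dist f c
        ≤ (1 - ε)⁻¹ * (d + k)) :=
  fractional_facility_location_guarantee_general cost hcost dist hdist ε hε0 hε1 k d hfrac N hN
    hNint
end
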